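/- arXiv:2006.15785 — 4 statements merged into one kernel-verified Lean document; each statement's English description precedes it below -/
import Mathlib

section
/- Minimax upper bound (oracle procedure): Fix δ∈(0,1) and let C_0 be the universal constant of the uniform Bernstein inequality for non-identically distributed samples. Let t* be a value of t∈[N+1] minimizing C_ρ·( 2^{10}·C_0^4·C_β·( d·log((1/d)·Σ_{s=1}^t n_(s)) + log(1/δ) ) / Σ_{s=1}^t n_(s) )^{1/((2−β)·ρ̄_t)}, and let ĥ_{Z^{(t*)}} be the ERM over the aggregated sample Z^{(t*)}. Then for any Π ∈ M(C_ρ, {ρ_t}_{t∈[N]}, {n_t}_{t∈[N+1]}, C_β, β), with probability at least 1−δ over Z ∼ Π, E_D(ĥ_{Z^{(t*)}}) ≤ min_{t∈[N+1]} C_ρ·( C·( d·log((1/d)·Σ_{s=1}^t n_(s)) + log(1/δ) ) / Σ_{s=1}^t n_(s) )^{1/((2−β)·ρ̄_t)}, where C = 2^{10}·C_0^4·C_β. -/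
/-!
On the event of the uniform Bernstein inequality for the pooled sample `Z^{(t*)}` (whose law is
the product of one `P_t` per pooled point), an ERM `ĥ` compared with the common minimizer `h*`
has weighted excess risk `A = Σ_t (n_t / N_t) E_{P_t}(ĥ) ≤ C₀ √(C_β A^β ε) + C₀ ε`: the Bernstein
condition and the concavity of `x ↦ x^β` bound the weighted disagreement by `C_β A^β`. This
fixed-point inequality gives `A ≤ (C ε)^{1/(2-β)}`. The transfer exponents give
`(E_D(ĥ) / C_ρ)^{ρ_t} ≤ E_{P_t}(ĥ)`, and the convexity of `r ↦ x^r` averages this to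
`(E_D(ĥ) / C_ρ)^{ρ̄} ≤ A`. The constant needs `C₀ ≥ 1/4`, which the uniform Bernstein inequality
itself forces on a single fair coin flip; a rate above `1` is trivial.
-/

open MeasureTheory Finset

noncomputable section

namespace Paper

universe u

section Basic

variable {X : Type u} [MeasurableSpace X]

/-- 0-1 risk of a classifier under a distribution on `X × Bool`. -/
def risk (P : Measure (X × Bool)) (h : X → Bool) : ℝ :=
  (P {p | h p.1 ≠ p.2}).toReal

/-- Disagreement pseudo-distance `P(h ≠ h')` under the marginal. -/
def dis (P : Measure (X × Bool)) (h h' : X → Bool) : ℝ :=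
  (P {p | h p.1 ≠ h' p.1}).toReal

/-- Excess risk over the best in class. -/
def excess (H : Set (X → Bool)) (P : Measure (X × Bool)) (h : X → Bool) : ℝ :=
  risk P h - ⨅ h' : H, risk P (h' : X → Bool)

/-- `h` is a risk minimizer in `H` for `P`. -/
def IsOpt (H : Set (X → Bool)) (P : Measure (X × Bool)) (h : X → Bool) : Prop :=
  h ∈ H ∧ ∀ h' ∈ H, risk P h ≤ risk P h'

/-- Bernstein class condition with respect to a given minimizer. -/
def BernsteinAt (H : Set (X → Bool)) (P : Measure (X × Bool)) (hstar : X → Bool)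
    (Cb β : ℝ) : Prop :=
  IsOpt H P hstar ∧ ∀ h ∈ H, dis P h hstar ≤ Cb * excess H P h ^ β

/-- Bernstein class condition with parameters `(Cb, β)`. -/
def Bernstein (H : Set (X → Bool)) (P : Measure (X × Bool)) (Cb β : ℝ) : Prop :=
  ∃ hstar, BernsteinAt H P hstar Cb β

/-- `P` has transfer exponent `(Cr, ρ)` with respect to `D`. -/
def Transfer (H : Set (X → Bool)) (P D : Measure (X × Bool)) (Cr ρ : ℝ) : Prop :=
  ∀ h ∈ H, excess H D h ≤ Cr * excess H P h ^ (1 / ρ)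

/-- `H` shatters the finite set `s`. -/
def Shatters (H : Set (X → Bool)) (s : Finset X) : Prop :=
  ∀ f : X → Bool, ∃ h ∈ H, ∀ x ∈ s, h x = f x

/-- VC dimension of `H` is at most `d`. -/
def VCLE (H : Set (X → Bool)) (d : ℕ) : Prop :=
  ∀ s : Finset X, Shatters H s → s.card ≤ d

/-- VC dimension of `H` is exactly `d`. -/
def VCEq (H : Set (X → Bool)) (d : ℕ) : Prop :=
  VCLE H d ∧ ∃ s : Finset X, Shatters H s ∧ s.card = d

/-- The positive logarithm `log x = max (ln x) 1`. -/
def plog (x : ℝ) : ℝ := max (Real.log x) 1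

/-- `ε(m, δ) = (d/m) log(m/d) + (1/m) log(1/δ)`. -/
def eps (d m : ℕ) (δ : ℝ) : ℝ :=
  ((d : ℝ) / m) * plog ((m : ℝ) / d) + (1 / m) * plog (1 / δ)

/-- Empirical risk on a sample of size `m`. -/
def empRisk {m : ℕ} (S : Fin m → X × Bool) (h : X → Bool) : ℝ :=
  (∑ i, if h (S i).1 ≠ (S i).2 then (1 : ℝ) else 0) / m

/-- Excess empirical risk. -/
def empExcess {m : ℕ} (S : Fin m → X × Bool) (h h' : X → Bool) : ℝ :=
  empRisk S h - empRisk S h'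

/-- Empirical disagreement pseudo-distance. -/
def empDis {m : ℕ} (S : Fin m → X × Bool) (h h' : X → Bool) : ℝ :=
  (∑ i, if h (S i).1 ≠ h' (S i).1 then (1 : ℝ) else 0) / m

/-- `h` is an empirical risk minimizer over `H` for the sample `S`. -/
def IsERM (H : Set (X → Bool)) {m : ℕ} (S : Fin m → X × Bool) (h : X → Bool) : Prop :=
  h ∈ H ∧ ∀ h' ∈ H, empRisk S h ≤ empRisk S h'

end Basic

/-- The uniform Bernstein inequality (for VC classes and independent,
not necessarily identically distributed samples) holds with constant `C0`. -/
def UnifBernstein (C0 : ℝ) : Prop :=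
  ∀ (Y : Type u) (_ : MeasurableSpace Y) (H : Set (Y → Bool)) (d : ℕ),
    VCEq H d →
    ∀ m : ℕ, 0 < m → ∀ δ : ℝ, 0 < δ → δ < 1 →
    ∀ μ : Fin m → Measure (Y × Bool), (∀ i, IsProbabilityMeasure (μ i)) →
    ENNReal.ofReal (1 - δ) ≤
      Measure.pi μ {S : Fin m → Y × Bool | ∀ h ∈ H, ∀ h' ∈ H,
        ((∑ i, (risk (μ i) h - risk (μ i) h')) / m ≤
            empExcess S h h'
              + C0 * Real.sqrt
                  (min ((∑ i, dis (μ i) h h') / m) (empDis S h h') * eps d m δ)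
              + C0 * eps d m δ)
        ∧ ((1 / 2) * ((∑ i, dis (μ i) h h') / m) - C0 * eps d m δ ≤ empDis S h h')
        ∧ (empDis S h h' ≤ 2 * ((∑ i, dis (μ i) h h') / m) + C0 * eps d m δ)}

section Multi

variable {X : Type u} [MeasurableSpace X] {N : ℕ}

/-- The multisample distribution `Π = ∏_t P_t^{n_t}`. -/
def msM (P : Fin (N + 1) → Measure (X × Bool)) (n : Fin (N + 1) → ℕ) :
    Measure ((t : Fin (N + 1)) → Fin (n t) → X × Bool) :=
  Measure.pi fun t => Measure.pi fun _ => P t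

/-- Membership in the multisource class `M(Cr, {ρ_t}, {n_t}, Cb, β)`:
(A1) a common optimal classifier, (A2) transfer exponents to the target
`D = P (Fin.last N)`, (A3) Bernstein class condition for every task. -/
def MemClass (H : Set (X → Bool)) (P : Fin (N + 1) → Measure (X × Bool))
    (Cr : ℝ) (ρ : Fin (N + 1) → ℝ) (Cb β : ℝ) : Prop :=
  (∀ t, IsProbabilityMeasure (P t)) ∧
  (∃ hstar ∈ H, ∀ t, IsOpt H (P t) hstar) ∧
  (∀ t, Transfer H (P t) (P (Fin.last N)) Cr (ρ t)) ∧
  (∀ t, Bernstein H (P t) Cb β)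

/-- Empirical risk over the aggregation of the datasets indexed by `T`. -/
def empRiskAgg {n : Fin (N + 1) → ℕ} (Z : (t : Fin (N + 1)) → Fin (n t) → X × Bool)
    (T : Finset (Fin (N + 1))) (h : X → Bool) : ℝ :=
  (∑ t ∈ T, ∑ i, if h (Z t i).1 ≠ (Z t i).2 then (1 : ℝ) else 0) / (∑ t ∈ T, (n t : ℝ))

/-- Empirical disagreement over the aggregation of the datasets indexed by `T`. -/
def empDisAgg {n : Fin (N + 1) → ℕ} (Z : (t : Fin (N + 1)) → Fin (n t) → X × Bool)
    (T : Finset (Fin (N + 1))) (h h' : X → Bool) : ℝ :=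
  (∑ t ∈ T, ∑ i, if h (Z t i).1 ≠ h' (Z t i).1 then (1 : ℝ) else 0) / (∑ t ∈ T, (n t : ℝ))

/-- `h` is an ERM over the aggregated sample `Z^T`. -/
def IsERMAgg (H : Set (X → Bool)) {n : Fin (N + 1) → ℕ}
    (Z : (t : Fin (N + 1)) → Fin (n t) → X × Bool) (T : Finset (Fin (N + 1)))
    (h : X → Bool) : Prop :=
  h ∈ H ∧ ∀ h' ∈ H, empRiskAgg Z T h ≤ empRiskAgg Z T h'

/-- Partial sum of sample sizes along the sorted order (real valued). -/
def NtR (n : Fin (N + 1) → ℕ) (σp : Equiv.Perm (Fin (N + 1))) (t : Fin (N + 1)) : ℝ :=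
  ∑ s ∈ Finset.Iic t, (n (σp s) : ℝ)

/-- Partial sum of sample sizes along the sorted order (natural number valued). -/
def NtN (n : Fin (N + 1) → ℕ) (σp : Equiv.Perm (Fin (N + 1))) (t : Fin (N + 1)) : ℕ :=
  ∑ s ∈ Finset.Iic t, n (σp s)

/-- The average transfer exponent `ρ̄_t`. -/
def rhoBar (n : Fin (N + 1) → ℕ) (ρ : Fin (N + 1) → ℝ) (σp : Equiv.Perm (Fin (N + 1)))
    (t : Fin (N + 1)) : ℝ :=
  (∑ s ∈ Finset.Iic t, (n (σp s) : ℝ) * ρ (σp s)) / NtR n σp t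

/-- `σp` sorts the transfer exponents in nondecreasing order:
`ρ_(1) ≤ ρ_(2) ≤ … ≤ ρ_(N+1)`. -/
def SortedFor (ρ : Fin (N + 1) → ℝ) (σp : Equiv.Perm (Fin (N + 1))) : Prop :=
  ∀ i j : Fin (N + 1), i ≤ j → ρ (σp i) ≤ ρ (σp j)

/-- The oracle rate `Cr (Cc (d log(N_t/d) + log(1/δ)) / N_t)^{1/((2-β) ρ̄_t)}`. -/
def rateB (Cr Cc β : ℝ) (d : ℕ) (δ : ℝ) (n : Fin (N + 1) → ℕ) (ρ : Fin (N + 1) → ℝ)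
    (σp : Equiv.Perm (Fin (N + 1))) (t : Fin (N + 1)) : ℝ :=
  Cr * (Cc * ((d : ℝ) * plog (NtR n σp t / d) + plog (1 / δ)) / NtR n σp t)
      ^ (1 / ((2 - β) * rhoBar n ρ σp t))

/-- The minimax-lower-bound rate `(c₂ d / (N_t log² N_t))^{1/((2-β) ρ̄_t)}`. -/
def rateLow (β c2 : ℝ) (d : ℕ) (n : Fin (N + 1) → ℕ) (ρ : Fin (N + 1) → ℝ)
    (σp : Equiv.Perm (Fin (N + 1))) (t : Fin (N + 1)) : ℝ :=
  (c2 * d / (NtR n σp t * plog (NtR n σp t) ^ 2)) ^ (1 / ((2 - β) * rhoBar n ρ σp t))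

end Multi

section TwoPoint

variable {X : Type u} [MeasurableSpace X]

/-- The distribution on `{x₀, x₁} × {±1}` with marginal mass `w` at `x₁`,
regression value `η = P(Y = 1 | x₁)` and deterministic label `1` at `x₀`.
The label `+1` is encoded as `true` and `-1` as `false`. -/
def twoPt (x0 x1 : X) (w η : ℝ) : Measure (X × Bool) :=
  ENNReal.ofReal (w * η) • Measure.dirac (x1, true)
    + ENNReal.ofReal (w * (1 - η)) • Measure.dirac (x1, false)
    + ENNReal.ofReal (1 - w) • Measure.dirac (x0, true)

/-- The sign `±1` associated with `σ : Bool`. -/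
def sgn (σ : Bool) : ℝ := if σ then 1 else -1

/-- `ε = (n N_P)^{-1/(2-β)}`. -/
def epsSrc (β : ℝ) (n NP : ℕ) : ℝ := ((n * NP : ℕ) : ℝ) ^ (-(1 / (2 - β)))

/-- `ε₀ = 1 ∧ n_D^{-1/(2-β)}` (with the convention `1/0 = ∞`). -/
def epsTgt (β : ℝ) (nD : ℕ) : ℝ := (max 1 (nD : ℝ)) ^ (-(1 / (2 - β)))

/-- The target distribution `D_σ`. -/
def Dtgt (x0 x1 : X) (β c0 : ℝ) (nD : ℕ) (σ : Bool) : Measure (X × Bool) :=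
  twoPt x0 x1 (epsTgt β nD ^ β / 2) (1 / 2 + sgn σ * c0 * epsTgt β nD ^ (1 - β))

/-- The noisy source distribution `P_σ`. -/
def Psrc (x0 x1 : X) (β c1 : ℝ) (n NP : ℕ) (σ : Bool) : Measure (X × Bool) :=
  twoPt x0 x1 (c1 * epsSrc β n NP ^ β) (1 / 2 + sgn σ * epsSrc β n NP ^ (1 - β))

/-- The benign source distribution `Q_σ`. -/
def Qsrc (x0 x1 : X) (σ : Bool) : Measure (X × Bool) :=
  twoPt x0 x1 1 ((1 + sgn σ) / 2)

/-- The mixture distribution `α_P P_σ^n + α_Q Q_σ^n` of a source block. -/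
def blockM (x0 x1 : X) (β c1 : ℝ) (n NP NQ : ℕ) (σ : Bool) :
    Measure (Fin n → X × Bool) :=
  ENNReal.ofReal ((NP : ℝ) / (NP + NQ)) • Measure.pi (fun _ => Psrc x0 x1 β c1 n NP σ)
    + ENNReal.ofReal ((NQ : ℝ) / (NP + NQ)) • Measure.pi (fun _ => Qsrc x0 x1 σ)

/-- The target block distribution `D_σ^{n_D}`. -/
def tgtM (x0 x1 : X) (β c0 : ℝ) (nD : ℕ) (σ : Bool) : Measure (Fin nD → X × Bool) :=
  Measure.pi fun _ => Dtgt x0 x1 β c0 nD σ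

/-- The joint distribution `Γ_σ = (α_P P_σ^n + α_Q Q_σ^n)^N × D_σ^{n_D}`. -/
def Gamma (x0 x1 : X) (β c0 c1 : ℝ) (n nD NP NQ : ℕ) (σ : Bool) :
    Measure ((Fin (NP + NQ) → Fin n → X × Bool) × (Fin nD → X × Bool)) :=
  (Measure.pi fun _ : Fin (NP + NQ) => blockM x0 x1 β c1 n NP NQ σ).prod
    (tgtM x0 x1 β c0 nD σ)

/-- A single source block together with the latent indicator of the mixture
component (`true` for the `P_σ` component, `false` for the `Q_σ` component). -/
def blockJ (x0 x1 : X) (β c1 : ℝ) (n NP NQ : ℕ) (σ : Bool) :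
    Measure (Bool × (Fin n → X × Bool)) :=
  ENNReal.ofReal ((NP : ℝ) / (NP + NQ)) •
      (Measure.dirac true).prod (Measure.pi fun _ => Psrc x0 x1 β c1 n NP σ)
    + ENNReal.ofReal ((NQ : ℝ) / (NP + NQ)) •
      (Measure.dirac false).prod (Measure.pi fun _ => Qsrc x0 x1 σ)

/-- The joint distribution `Γ_σ`, augmented with the latent component
indicators of the mixture blocks. -/
def GammaJ (x0 x1 : X) (β c0 c1 : ℝ) (n nD NP NQ : ℕ) (σ : Bool) :
    Measure ((Fin (NP + NQ) → Bool × (Fin n → X × Bool)) × (Fin nD → X × Bool)) :=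
  (Measure.pi fun _ : Fin (NP + NQ) => blockJ x0 x1 β c1 n NP NQ σ).prod
    (tgtM x0 x1 β c0 nD σ)

/-- `N̂_σ(Z)`: number of homogeneous blocks with all points at `x₁` and label `σ`. -/
def NhatS (x1 : X) {Nn n : ℕ} (Zb : Fin Nn → Fin n → X × Bool) (σ : Bool) : ℕ :=
  ({t | ∀ i, Zb t i = (x1, σ)} : Set (Fin Nn)).ncard

/-- `n̂_σ(Z)`: total number of points at `x₁` with label `σ`. -/
def nhatS (x1 : X) {Nn n : ℕ} (Zb : Fin Nn → Fin n → X × Bool) (σ : Bool) : ℕ :=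
  ({p : Fin Nn × Fin n | Zb p.1 p.2 = (x1, σ)}).ncard

/-- `ñ_σ(Z) = n̂_σ(Z) − n N̂_σ(Z)`: number of points at `x₁` with label `σ`
excluding homogeneous blocks. -/
def ntildeS (x1 : X) {Nn n : ℕ} (Zb : Fin Nn → Fin n → X × Bool) (σ : Bool) : ℕ :=
  nhatS x1 Zb σ - n * NhatS x1 Zb σ

/-- `N̂_P(W)`: number of homogeneous blocks generated by the `P₋` component. -/
def NhatP (x1 : X) {Nn n : ℕ} (Wb : Fin Nn → Bool × (Fin n → X × Bool)) : ℕ :=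
  ({t | (Wb t).1 = true ∧ ∃ b, ∀ i, (Wb t).2 i = (x1, b)} : Set (Fin Nn)).ncard

/-- `N̂_Q(W)`: number of homogeneous blocks generated by the `Q₋` component. -/
def NhatQ (x1 : X) {Nn n : ℕ} (Wb : Fin Nn → Bool × (Fin n → X × Bool)) : ℕ :=
  ({t | (Wb t).1 = false ∧ ∃ b, ∀ i, (Wb t).2 i = (x1, b)} : Set (Fin Nn)).ncard

end TwoPoint

section RealInequalities

open Real

theorem rpow_weighted_sum_le_weighted_sum_rpow {ι : Type*} {T : Finset ι} {w r : ι → ℝ}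
    {x : ℝ} (hx : 0 < x) (hw0 : ∀ t ∈ T, 0 ≤ w t) (hw1 : ∑ t ∈ T, w t = 1) :
    x ^ (∑ t ∈ T, w t * r t) ≤ ∑ t ∈ T, w t * x ^ r t := by
  simpa only [smul_eq_mul] using
    (convexOn_rpow_left hx).map_sum_le hw0 hw1 fun t _ => Set.mem_univ (r t)

theorem weighted_sum_rpow_le_rpow_weighted_sum {ι : Type*} {T : Finset ι} {w E : ι → ℝ}
    {β : ℝ} (hβ0 : 0 ≤ β) (hβ1 : β ≤ 1) (hw0 : ∀ t ∈ T, 0 ≤ w t) (hw1 : ∑ t ∈ T, w t = 1)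
    (hE : ∀ t ∈ T, 0 ≤ E t) :
    ∑ t ∈ T, w t * E t ^ β ≤ (∑ t ∈ T, w t * E t) ^ β := by
  simpa only [smul_eq_mul] using (concaveOn_rpow hβ0 hβ1).le_map_sum hw0 hw1 hE

theorem weighted_sum_pos {ι : Type*} {T : Finset ι} {w r : ι → ℝ}
    (hw0 : ∀ t ∈ T, 0 ≤ w t) (hw1 : ∑ t ∈ T, w t = 1) (hr : ∀ t ∈ T, 0 < r t) :
    0 < ∑ t ∈ T, w t * r t := by
  obtain ⟨t, ht, hwt⟩ : ∃ t ∈ T, 0 < w t := by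
    by_contra! h
    have : ∑ t ∈ T, w t ≤ 0 := Finset.sum_nonpos h
    linarith
  exact Finset.sum_pos' (fun s hs => mul_nonneg (hw0 s hs) (hr s hs).le)
    ⟨t, ht, mul_pos hwt (hr t ht)⟩

/-- The fixed-point inequality `A ≤ C₀ √(C_β A^β ε) + C₀ ε` forces `A` down to the rate
`ε^{1/(2-β)}`: either the square-root term dominates, and then `A^{2-β} ≲ ε`, or the linear
term does, and then `A ≲ ε`, which is smaller since `2^10 C₀^4 C_β ε ≤ 1`. -/
theorem le_rpow_of_le_sqrt_add {C0 Cb β ε A : ℝ} (hC0 : 1 / 4 ≤ C0) (hCb : 1 ≤ Cb)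
    (hβ1 : β ≤ 1) (hε : 0 ≤ ε) (hK : 2 ^ 10 * C0 ^ 4 * Cb * ε ≤ 1)
    (hA0 : 0 ≤ A) (hA : A ≤ C0 * √(Cb * A ^ β * ε) + C0 * ε) :
    A ≤ (2 ^ 10 * C0 ^ 4 * Cb * ε) ^ (1 / (2 - β)) := by
  have h2β : 0 < 2 - β := by linarith
  have hC0sq : 1 / 16 ≤ C0 ^ 2 := by nlinarith
  have hKε : 0 ≤ 2 ^ 10 * C0 ^ 4 * Cb * ε := by positivity
  rcases le_total (C0 * ε) (C0 * √(Cb * A ^ β * ε)) with hsqrt | hlin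
  · rcases hA0.eq_or_lt with rfl | hApos
    · positivity
    have hAβ : 0 < A ^ β := rpow_pos_of_pos hApos β
    have hsq : A ^ 2 ≤ 4 * C0 ^ 2 * (Cb * A ^ β * ε) := by
      have h := pow_le_pow_left₀ hA0 (show A ≤ 2 * (C0 * √(Cb * A ^ β * ε)) by linarith) 2
      rw [mul_pow, mul_pow, sq_sqrt (by positivity), ← mul_assoc] at h
      linarith
    have hpow : A ^ (2 - β) ≤ 2 ^ 10 * C0 ^ 4 * Cb * ε := by
      rw [rpow_sub hApos, rpow_two, div_le_iff₀ hAβ]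
      nlinarith [mul_le_mul_of_nonneg_right hC0sq (show 0 ≤ C0 ^ 2 * Cb * ε * A ^ β by positivity)]
    calc A = (A ^ (2 - β)) ^ (1 / (2 - β)) := by
          rw [← rpow_mul hA0, mul_one_div_cancel h2β.ne', rpow_one]
      _ ≤ _ := by gcongr
  · have hC0cube : 1 / 64 ≤ C0 ^ 3 := by nlinarith
    calc A ≤ 2 * C0 * ε := by linarith
      _ ≤ 2 ^ 10 * C0 ^ 4 * Cb * ε := by
          nlinarith [mul_le_mul_of_nonneg_right hC0cube (show 0 ≤ C0 * Cb * ε by positivity),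
            mul_le_mul_of_nonneg_left hCb (show 0 ≤ C0 * ε by positivity)]
      _ ≤ _ := self_le_rpow_of_le_one hKε hK (by rw [div_le_one h2β]; linarith)

end RealInequalities

section Classifiers

variable {X : Type u} [MeasurableSpace X] {H : Set (X → Bool)} {P D : Measure (X × Bool)}
  {h hstar : X → Bool}

theorem bddBelow_range_risk (H : Set (X → Bool)) (P : Measure (X × Bool)) :
    BddBelow (Set.range fun h' : H => risk P h') :=
  ⟨0, by rintro _ ⟨h', rfl⟩; exact ENNReal.toReal_nonneg⟩

theorem excess_nonneg (hh : h ∈ H) : 0 ≤ excess H P h :=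
  sub_nonneg.mpr (ciInf_le (bddBelow_range_risk H P) ⟨h, hh⟩)

theorem excess_le_one [IsProbabilityMeasure P] (h : X → Bool) : excess H P h ≤ 1 := by
  have hrisk : risk P h ≤ 1 :=
    ENNReal.toReal_le_of_le_ofReal zero_le_one (by simpa using prob_le_one)
  have hinf : 0 ≤ ⨅ h' : H, risk P h' := Real.iInf_nonneg fun _ => ENNReal.toReal_nonneg
  unfold excess
  linarith

theorem IsOpt.iInf_risk_eq (hopt : IsOpt H P hstar) : ⨅ h' : H, risk P h' = risk P hstar :=
  have : Nonempty H := ⟨⟨hstar, hopt.1⟩⟩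
  le_antisymm (ciInf_le (bddBelow_range_risk H P) ⟨hstar, hopt.1⟩)
    (le_ciInf fun h' => hopt.2 h' h'.2)

theorem IsOpt.excess_eq (hopt : IsOpt H P hstar) (h : X → Bool) :
    excess H P h = risk P h - risk P hstar := by
  rw [excess, hopt.iInf_risk_eq]

theorem dis_comm (P : Measure (X × Bool)) (f g : X → Bool) : dis P f g = dis P g f := by
  simp only [dis, ne_comm]

theorem dis_triangle (P : Measure (X × Bool)) [IsFiniteMeasure P] (f g k : X → Bool) :
    dis P f k ≤ dis P f g + dis P g k := by
  have hsub : {p : X × Bool | f p.1 ≠ k p.1} ⊆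
      {p | f p.1 ≠ g p.1} ∪ {p | g p.1 ≠ k p.1} := by
    intro p hp
    by_cases hfg : f p.1 = g p.1
    · exact Or.inr fun hgk => hp (hfg.trans hgk)
    · exact Or.inl hfg
  unfold dis
  rw [← ENNReal.toReal_add (measure_ne_top _ _) (measure_ne_top _ _)]
  exact ENNReal.toReal_mono (by finiteness) ((measure_mono hsub).trans (measure_union_le _ _))

theorem dis_le_one [IsProbabilityMeasure P] (f g : X → Bool) : dis P f g ≤ 1 :=
  ENNReal.toReal_le_of_le_ofReal zero_le_one (by simpa using prob_le_one)

/-- The Bernstein condition is phrased through some minimizer; since every minimizer `hstar` has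
zero excess risk, it transfers to `hstar` (for `β = 0` directly, as `dis ≤ 1 ≤ Cb`). -/
theorem Bernstein.dis_le [IsProbabilityMeasure P] {Cb β : ℝ} (hB : Bernstein H P Cb β)
    (hCb : 1 ≤ Cb) (hβ : 0 ≤ β) (hopt : IsOpt H P hstar) (hh : h ∈ H) :
    dis P h hstar ≤ Cb * excess H P h ^ β := by
  rcases hβ.eq_or_lt with rfl | hβ
  · simpa using (dis_le_one h hstar).trans hCb
  obtain ⟨g, -, hg⟩ := hB
  have hstar_g : dis P hstar g ≤ 0 := by
    simpa [hopt.excess_eq, Real.zero_rpow hβ.ne'] using hg hstar hopt.1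
  linarith [dis_triangle P h g hstar, dis_comm P g hstar, hg h hh]

theorem Transfer.rpow_div_le {Cr ρ : ℝ} (htr : Transfer H P D Cr ρ) (hCr : 0 < Cr)
    (hρ : 0 < ρ) (hh : h ∈ H) : (excess H D h / Cr) ^ ρ ≤ excess H P h := by
  have hle : excess H D h / Cr ≤ excess H P h ^ (1 / ρ) := by
    rw [div_le_iff₀ hCr, mul_comm]
    exact htr h hh
  calc (excess H D h / Cr) ^ ρ ≤ (excess H P h ^ (1 / ρ)) ^ ρ := by
        gcongr
        exact div_nonneg (excess_nonneg hh) hCr.le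
    _ = excess H P h := by
        rw [← Real.rpow_mul (excess_nonneg hh), one_div_mul_cancel hρ.ne', Real.rpow_one]

end Classifiers

section Weighted

variable {X : Type u} [MeasurableSpace X] {H : Set (X → Bool)} {ι : Type*} {T : Finset ι}
  {w : ι → ℝ} {P : ι → Measure (X × Bool)} {h hstar : X → Bool}

theorem weighted_excess_le [∀ t, IsProbabilityMeasure (P t)] {C0 Cb β ε : ℝ}
    (hw0 : ∀ t ∈ T, 0 ≤ w t) (hw1 : ∑ t ∈ T, w t = 1)
    (hopt : ∀ t ∈ T, IsOpt H (P t) hstar) (hB : ∀ t ∈ T, Bernstein H (P t) Cb β)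
    (hC0 : 1 / 4 ≤ C0) (hCb : 1 ≤ Cb) (hβ0 : 0 ≤ β) (hβ1 : β ≤ 1) (hε : 0 ≤ ε)
    (hK : 2 ^ 10 * C0 ^ 4 * Cb * ε ≤ 1) (hh : h ∈ H)
    (hbound : ∑ t ∈ T, w t * excess H (P t) h ≤
      C0 * √((∑ t ∈ T, w t * dis (P t) h hstar) * ε) + C0 * ε) :
    ∑ t ∈ T, w t * excess H (P t) h ≤ (2 ^ 10 * C0 ^ 4 * Cb * ε) ^ (1 / (2 - β)) := by
  set A := ∑ t ∈ T, w t * excess H (P t) h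
  have hE0 : ∀ t ∈ T, 0 ≤ excess H (P t) h := fun _ _ => excess_nonneg hh
  have hdis : ∑ t ∈ T, w t * dis (P t) h hstar ≤ Cb * A ^ β :=
    calc ∑ t ∈ T, w t * dis (P t) h hstar
        ≤ ∑ t ∈ T, w t * (Cb * excess H (P t) h ^ β) :=
          Finset.sum_le_sum fun t ht => mul_le_mul_of_nonneg_left
            ((hB t ht).dis_le hCb hβ0 (hopt t ht) hh) (hw0 t ht)
      _ = Cb * ∑ t ∈ T, w t * excess H (P t) h ^ β := by
          rw [Finset.mul_sum]
          exact Finset.sum_congr rfl fun t _ => by ring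
      _ ≤ Cb * A ^ β := by
          gcongr
          exact weighted_sum_rpow_le_rpow_weighted_sum hβ0 hβ1 hw0 hw1 hE0
  refine le_rpow_of_le_sqrt_add hC0 hCb hβ1 hε hK
    (Finset.sum_nonneg fun t ht => mul_nonneg (hw0 t ht) (hE0 t ht)) (hbound.trans ?_)
  gcongr

theorem excess_le_mul_rpow_of_transfer {D : Measure (X × Bool)} {Cr : ℝ} {ρ : ι → ℝ}
    (hw0 : ∀ t ∈ T, 0 ≤ w t) (hw1 : ∑ t ∈ T, w t = 1)
    (htr : ∀ t ∈ T, Transfer H (P t) D Cr (ρ t)) (hρ : ∀ t ∈ T, 0 < ρ t) (hCr : 0 < Cr)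
    (hh : h ∈ H) :
    excess H D h ≤
      Cr * (∑ t ∈ T, w t * excess H (P t) h) ^ (1 / ∑ t ∈ T, w t * ρ t) := by
  have hρbar : 0 < ∑ t ∈ T, w t * ρ t := weighted_sum_pos hw0 hw1 hρ
  rcases (excess_nonneg (P := D) hh).eq_or_lt with hD | hD
  · rw [← hD]
    exact mul_nonneg hCr.le (Real.rpow_nonneg
      (Finset.sum_nonneg fun t ht => mul_nonneg (hw0 t ht) (excess_nonneg hh)) _)
  set x := excess H D h / Cr with hx_def
  have hx : 0 < x := div_pos hD hCr
  have hxρ : x ^ (∑ t ∈ T, w t * ρ t) ≤ ∑ t ∈ T, w t * excess H (P t) h :=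
    (rpow_weighted_sum_le_weighted_sum_rpow hx hw0 hw1).trans <|
      Finset.sum_le_sum fun t ht => mul_le_mul_of_nonneg_left
        ((htr t ht).rpow_div_le hCr (hρ t ht) hh) (hw0 t ht)
  calc excess H D h = Cr * (x ^ (∑ t ∈ T, w t * ρ t)) ^ (1 / ∑ t ∈ T, w t * ρ t) := by
        rw [← Real.rpow_mul hx.le, mul_one_div_cancel hρbar.ne', Real.rpow_one, hx_def,
          mul_div_cancel₀ _ hCr.ne']
    _ ≤ _ := by gcongr

theorem excess_le_of_weighted_bound [∀ t, IsProbabilityMeasure (P t)] {D : Measure (X × Bool)}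
    {C0 Cb Cr β ε : ℝ} {ρ : ι → ℝ} (hw0 : ∀ t ∈ T, 0 ≤ w t) (hw1 : ∑ t ∈ T, w t = 1)
    (hopt : ∀ t ∈ T, IsOpt H (P t) hstar) (hB : ∀ t ∈ T, Bernstein H (P t) Cb β)
    (htr : ∀ t ∈ T, Transfer H (P t) D Cr (ρ t)) (hρ : ∀ t ∈ T, 0 < ρ t) (hCr : 0 < Cr)
    (hC0 : 1 / 4 ≤ C0) (hCb : 1 ≤ Cb) (hβ0 : 0 ≤ β) (hβ1 : β ≤ 1) (hε : 0 ≤ ε)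
    (hK : 2 ^ 10 * C0 ^ 4 * Cb * ε ≤ 1) (hh : h ∈ H)
    (hbound : ∑ t ∈ T, w t * excess H (P t) h ≤
      C0 * √((∑ t ∈ T, w t * dis (P t) h hstar) * ε) + C0 * ε) :
    excess H D h ≤
      Cr * (2 ^ 10 * C0 ^ 4 * Cb * ε) ^ (1 / ((2 - β) * ∑ t ∈ T, w t * ρ t)) := by
  have hρbar : 0 < ∑ t ∈ T, w t * ρ t := weighted_sum_pos hw0 hw1 hρ
  have hA := weighted_excess_le hw0 hw1 hopt hB hC0 hCb hβ0 hβ1 hε hK hh hbound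
  calc excess H D h
      ≤ Cr * (∑ t ∈ T, w t * excess H (P t) h) ^ (1 / ∑ t ∈ T, w t * ρ t) :=
        excess_le_mul_rpow_of_transfer hw0 hw1 htr hρ hCr hh
    _ ≤ Cr * ((2 ^ 10 * C0 ^ 4 * Cb * ε) ^ (1 / (2 - β))) ^ (1 / ∑ t ∈ T, w t * ρ t) := by
        gcongr
        exact Finset.sum_nonneg fun t ht => mul_nonneg (hw0 t ht) (excess_nonneg hh)
    _ = _ := by
        rw [← Real.rpow_mul (by positivity), one_div_mul_one_div]

end Weighted

section Pooling

variable {ι : Type*} [Fintype ι] {κ : ι → Type*} [∀ i, Fintype (κ i)]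

theorem measurePreserving_piCurry_symm {Y : (i : ι) → κ i → Type*}
    [∀ i j, MeasurableSpace (Y i j)] (μ : (i : ι) → (j : κ i) → Measure (Y i j))
    [∀ i j, SigmaFinite (μ i j)] :
    MeasurePreserving (MeasurableEquiv.piCurry Y).symm
      (Measure.pi fun i => Measure.pi (μ i)) (Measure.pi fun p => μ p.1 p.2) := by
  refine ⟨(MeasurableEquiv.piCurry Y).symm.measurable, (Measure.pi_eq fun s _ => ?_).symm⟩
  have hpre : (MeasurableEquiv.piCurry Y).symm ⁻¹' Set.univ.pi s =
      Set.univ.pi fun i => Set.univ.pi fun j => s ⟨i, j⟩ := by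
    ext f
    simp [MeasurableEquiv.coe_piCurry_symm, Sigma.forall, Sigma.uncurry]
  rw [MeasurableEquiv.map_apply, hpre, Measure.pi_pi]
  simp_rw [Measure.pi_pi]
  rw [← Finset.univ_sigma_univ, Finset.prod_sigma]

variable [DecidableEq ι] {n : ι → ℕ}

theorem sum_subtype_fst_mem {M : Type*} [AddCommMonoid M] (T : Finset ι)
    (f : ((t : ι) × Fin (n t)) → M) :
    ∑ p : {p : (t : ι) × Fin (n t) // p.1 ∈ T}, f p = ∑ t ∈ T, ∑ j, f ⟨t, j⟩ := by
  rw [← Finset.sum_subtype (T.sigma fun _ => Finset.univ) (by simp), Finset.sum_sigma]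

theorem card_subtype_fst_mem (T : Finset ι) :
    Fintype.card {p : (t : ι) × Fin (n t) // p.1 ∈ T} = ∑ t ∈ T, n t := by
  rw [Fintype.card_eq_sum_ones]
  exact (sum_subtype_fst_mem T fun _ => 1).trans (by simp)

/-- Valid for every set `B`, measurable or not: the pooled coordinates are split off by a
measurable equivalence, and the remaining samples form a factor of total mass one. -/
theorem pi_preimage_pool {α : Type*} [MeasurableSpace α] (P : ι → Measure α)
    [∀ t, IsProbabilityMeasure (P t)] (T : Finset ι) {m : ℕ}
    (e : Fin m ≃ {p : (t : ι) × Fin (n t) // p.1 ∈ T}) (B : Set (Fin m → α)) :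
    Measure.pi (fun t => Measure.pi fun _ : Fin (n t) => P t)
        ((fun Z i => Z (e i).1.1 (e i).1.2) ⁻¹' B) =
      Measure.pi (fun i => P (e i).1.1) B := by
  let Φ := (MeasurableEquiv.piCurry fun t (_ : Fin (n t)) => α).symm.trans <|
    (MeasurableEquiv.piEquivPiSubtypeProd (fun _ => α) (fun p => p.1 ∈ T)).trans <|
      (MeasurableEquiv.piCongrLeft (fun _ => α) e).symm.prodCongr (MeasurableEquiv.refl _)
  have hΦ : MeasurePreserving Φ (Measure.pi fun t => Measure.pi fun _ : Fin (n t) => P t)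
      ((Measure.pi fun i => P (e i).1.1).prod (Measure.pi fun p : {p : (t : ι) × Fin (n t) //
        p.1 ∉ T} => P p.1.1)) :=
    (measurePreserving_piCurry_symm fun t (_ : Fin (n t)) => P t).trans <|
      (measurePreserving_piEquivPiSubtypeProd _ _).trans <|
        ((measurePreserving_piCongrLeft (fun p : {p : (t : ι) × Fin (n t) // p.1 ∈ T} =>
          P p.1.1) e).symm _).prod (MeasurePreserving.id _)
  have hpre : (fun Z i => Z (e i).1.1 (e i).1.2) ⁻¹' B = Φ ⁻¹' (B ×ˢ Set.univ) := by
    ext Z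
    simp only [Set.mem_preimage, Set.mem_prod, Set.mem_univ, and_true]
    exact Iff.rfl
  rw [hpre, hΦ.measure_preimage_equiv, Measure.prod_prod, measure_univ, mul_one]

end Pooling

open scoped ENNReal in
theorem quarter_le_of_unifBernstein {C0 : ℝ} (hUB : UnifBernstein.{u} C0) : 1 / 4 ≤ C0 := by
  let coin : Measure (PUnit.{u + 1} × Bool) :=
    (2⁻¹ : ℝ≥0∞) • (Measure.dirac (PUnit.unit, true) + Measure.dirac (PUnit.unit, false))
  have hcoin : IsProbabilityMeasure coin :=
    ⟨by simp [coin, ENNReal.inv_two_add_inv_two]⟩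
  have hrisk : ∀ c : Bool, risk coin (fun _ => c) = 1 / 2 := by
    intro c
    cases c <;> simp [risk, coin]
  have hVC : VCEq (Set.univ : Set (PUnit.{u + 1} → Bool)) 1 :=
    ⟨fun s _ => Finset.card_le_one.2 fun a _ b _ => Subsingleton.elim a b,
      ⟨{PUnit.unit}, fun f => ⟨f, Set.mem_univ f, fun _ _ => rfl⟩, rfl⟩⟩
  have hε : eps 1 1 2⁻¹ = 2 := by
    have hlog2 : Real.log 2 ≤ 1 := by linarith [Real.log_two_lt_d9]
    norm_num [eps, plog, hlog2]
  obtain ⟨S, hS⟩ := nonempty_of_measure_ne_zero <| ne_of_gt <|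
    lt_of_lt_of_le (by norm_num) (hUB _ _ _ _ hVC 1 one_pos 2⁻¹ (by norm_num) (by norm_num)
      (fun _ => coin) fun _ => hcoin)
  -- the sample consists of one coin flip `b`: predicting `b` beats predicting `!b` by one
  -- empirically, while both have true risk `1/2`
  set b := (S 0).2 with hb
  have hgap := (hS (fun _ => b) trivial (fun _ => !b) trivial).1
  simp [hrisk, empExcess, empRisk, empDis, dis, Finset.filter_singleton, ← hb, hε] at hgap
  nlinarith [Real.sq_sqrt (show (0 : ℝ) ≤ 2 by norm_num), Real.sqrt_nonneg 2]

def poolWeight {ι : Type*} (n : ι → ℕ) (T : Finset ι) (t : ι) : ℝ :=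
  n t / ∑ s ∈ T, (n s : ℝ)

theorem poolWeight_nonneg {ι : Type*} (n : ι → ℕ) (T : Finset ι) (t : ι) :
    0 ≤ poolWeight n T t := by
  unfold poolWeight
  positivity

theorem sum_poolWeight {ι : Type*} {n : ι → ℕ} {T : Finset ι} (hm : 0 < ∑ t ∈ T, n t) :
    ∑ t ∈ T, poolWeight n T t = 1 := by
  simp only [poolWeight, ← Finset.sum_div]
  exact div_self (by exact_mod_cast hm.ne')

theorem eps_nonneg (d m : ℕ) (δ : ℝ) : 0 ≤ eps d m δ := by
  unfold eps plog
  positivity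

theorem unifBernstein_pool {C0 : ℝ} (hUB : UnifBernstein.{u} C0) {X : Type u}
    [MeasurableSpace X] {H : Set (X → Bool)} {d : ℕ} (hVC : VCEq H d) {N : ℕ}
    {n : Fin (N + 1) → ℕ} (P : Fin (N + 1) → Measure (X × Bool))
    [∀ t, IsProbabilityMeasure (P t)] (T : Finset (Fin (N + 1)))
    (hm : 0 < ∑ t ∈ T, n t) {δ : ℝ} (hδ0 : 0 < δ) (hδ1 : δ < 1) :
    ENNReal.ofReal (1 - δ) ≤ msM P n {Z | ∀ h ∈ H, ∀ h' ∈ H,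
      ∑ t ∈ T, poolWeight n T t * (risk (P t) h - risk (P t) h') ≤
        empRiskAgg Z T h - empRiskAgg Z T h'
          + C0 * √((∑ t ∈ T, poolWeight n T t * dis (P t) h h') * eps d (∑ t ∈ T, n t) δ)
          + C0 * eps d (∑ t ∈ T, n t) δ} := by
  set m := ∑ t ∈ T, n t
  let e : Fin m ≃ {p : (t : Fin (N + 1)) × Fin (n t) // p.1 ∈ T} :=
    (Fintype.equivFinOfCardEq (card_subtype_fst_mem T)).symm
  have hsum (f : ((t : Fin (N + 1)) × Fin (n t)) → ℝ) :
      ∑ i, f (e i) = ∑ t ∈ T, ∑ j, f ⟨t, j⟩ :=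
    (e.sum_comp fun p => f p.1).trans (sum_subtype_fst_mem T f)
  have hweighted (g : Fin (N + 1) → ℝ) :
      (∑ i, g (e i).1.1) / m = ∑ t ∈ T, poolWeight n T t * g t := by
    rw [hsum fun p => g p.1, Finset.sum_div]
    simp [poolWeight, m, div_mul_eq_mul_div]
  have hemp (Z : (t : Fin (N + 1)) → Fin (n t) → X × Bool) (g : X → Bool) :
      empRisk (fun i => Z (e i).1.1 (e i).1.2) g = empRiskAgg Z T g := by
    simp only [empRisk, empRiskAgg, hsum fun p => if g (Z p.1 p.2).1 ≠ (Z p.1 p.2).2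
      then (1 : ℝ) else 0, m, Nat.cast_sum]
  refine (hUB X _ H d hVC m hm δ hδ0 hδ1 (fun i => P (e i).1.1) fun i => inferInstance).trans ?_
  rw [msM, ← pi_preimage_pool P T e]
  refine measure_mono fun Z hZ h hh h' hh' => ?_
  obtain ⟨hZ, -, -⟩ := hZ h hh h' hh'
  rw [hweighted fun t => risk (P t) h - risk (P t) h', hweighted fun t => dis (P t) h h',
    empExcess, hemp, hemp] at hZ
  refine hZ.trans ?_
  have := quarter_le_of_unifBernstein hUB
  gcongr
  · exact eps_nonneg d m δ
  · exact min_le_left _ _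

section Rates

variable {N : ℕ} {n : Fin (N + 1) → ℕ} {ρ : Fin (N + 1) → ℝ} {σp : Equiv.Perm (Fin (N + 1))}

theorem NtN_eq_sum_image (t : Fin (N + 1)) :
    NtN n σp t = ∑ s ∈ (Finset.Iic t).image σp, n s :=
  (Finset.sum_image fun _ _ _ _ hab => σp.injective hab).symm

theorem rhoBar_eq_sum_poolWeight (t : Fin (N + 1)) :
    rhoBar n ρ σp t = ∑ s ∈ (Finset.Iic t).image σp,
      poolWeight n ((Finset.Iic t).image σp) s * ρ s := by
  have himage (f : Fin (N + 1) → ℝ) :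
      ∑ s ∈ (Finset.Iic t).image σp, f s = ∑ s ∈ Finset.Iic t, f (σp s) :=
    Finset.sum_image fun _ _ _ _ hab => σp.injective hab
  simp only [rhoBar, NtR, poolWeight, himage, Finset.sum_div, div_mul_eq_mul_div]

theorem rateB_eq (Cr Cc β : ℝ) (d : ℕ) (δ : ℝ) (t : Fin (N + 1)) :
    rateB Cr Cc β d δ n ρ σp t =
      Cr * (Cc * eps d (NtN n σp t) δ) ^ (1 / ((2 - β) * rhoBar n ρ σp t)) := by
  have hN : NtR n σp t = NtN n σp t := by simp [NtR, NtN]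
  simp only [rateB, eps, hN]
  ring_nf

/-- An empty pool makes `rhoBar` a division by zero, hence the exponent `0` and the rate `Cr`. -/
theorem NtN_pos_and_le_one_of_rateB_lt_one {Cr Cc β d δ} (hCr : 1 ≤ Cr) (hρ : ∀ t, 0 < ρ t)
    (hβ1 : β ≤ 1) {t : Fin (N + 1)} (hlt : rateB Cr Cc β d δ n ρ σp t < 1) :
    0 < NtN n σp t ∧ Cc * eps d (NtN n σp t) δ ≤ 1 := by
  rw [rateB_eq] at hlt
  have hexp : 0 ≤ 1 / ((2 - β) * rhoBar n ρ σp t) := by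
    have : 0 ≤ rhoBar n ρ σp t := by
      unfold rhoBar NtR
      exact div_nonneg (Finset.sum_nonneg fun s _ => mul_nonneg (by positivity) (hρ _).le)
        (by positivity)
    have : 0 < 2 - β := by linarith
    positivity
  constructor
  · by_contra! h0
    have hN : NtN n σp t = 0 := by omega
    have hρbar : rhoBar n ρ σp t = 0 := by
      simp [rhoBar, NtR, ← Nat.cast_sum, ← NtN.eq_def, hN]
    simp [hρbar] at hlt
    linarith
  · by_contra! hgt
    have := Real.one_le_rpow hgt.le hexp
    nlinarith

end Rates

theorem statement1_general (C0 : ℝ) (hUB : UnifBernstein.{u} C0) :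
    ∀ (X : Type u) (_ : MeasurableSpace X) (H : Set (X → Bool)) (d : ℕ),
      VCEq H d →
      ∀ (N : ℕ) (n : Fin (N + 1) → ℕ) (ρ : Fin (N + 1) → ℝ) (Cr Cb β : ℝ)
        (σp : Equiv.Perm (Fin (N + 1))) (δ : ℝ) (tstar : Fin (N + 1)),
        (∀ t : Fin (N + 1), (t : ℕ) < N → 1 ≤ n t) →
        (∀ t, 0 < ρ t) → ρ (Fin.last N) = 1 →
        2 ≤ Cr → 2 ≤ Cb → 0 ≤ β → β ≤ 1 →
        SortedFor ρ σp →
        0 < δ → δ < 1 →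
        (∀ t : Fin (N + 1),
          rateB Cr (2 ^ 10 * C0 ^ 4 * Cb) β d δ n ρ σp tstar ≤
            rateB Cr (2 ^ 10 * C0 ^ 4 * Cb) β d δ n ρ σp t) →
        ∀ P : Fin (N + 1) → Measure (X × Bool), MemClass H P Cr ρ Cb β →
          ENNReal.ofReal (1 - δ) ≤
            msM P n {Z | ∀ h, IsERMAgg H Z ((Finset.Iic tstar).image σp) h →
              excess H (P (Fin.last N)) h ≤
                ⨅ t : Fin (N + 1), rateB Cr (2 ^ 10 * C0 ^ 4 * Cb) β d δ n ρ σp t} := by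
  intro X _ H d hVC N n ρ Cr Cb β σp δ tstar _ hρ _ hCr hCb hβ0 hβ1 _ hδ0 hδ1 hmin P hmem
  obtain ⟨hP, ⟨hstar, hstarH, hopt⟩, htr, hB⟩ := hmem
  set T := (Finset.Iic tstar).image σp
  suffices ENNReal.ofReal (1 - δ) ≤ msM P n {Z | ∀ h, IsERMAgg H Z T h →
      excess H (P (Fin.last N)) h ≤ rateB Cr (2 ^ 10 * C0 ^ 4 * Cb) β d δ n ρ σp tstar} from
    this.trans (measure_mono fun Z hZ h hh => le_ciInf fun t => (hZ h hh).trans (hmin t))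
  rcases le_or_gt 1 (rateB Cr (2 ^ 10 * C0 ^ 4 * Cb) β d δ n ρ σp tstar) with hge | hlt
  · have : IsProbabilityMeasure (msM P n) := by unfold msM; infer_instance
    exact (ENNReal.ofReal_le_one.2 (by linarith)).trans <| measure_univ.symm.trans_le <|
      measure_mono fun Z _ h _ => (excess_le_one h).trans hge
  obtain ⟨hm, hK⟩ := NtN_pos_and_le_one_of_rateB_lt_one (by linarith) hρ hβ1 hlt
  rw [NtN_eq_sum_image] at hm hK
  refine (unifBernstein_pool hUB hVC P T hm hδ0 hδ1).trans (measure_mono fun Z hZ h hERM => ?_)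
  rw [rateB_eq, rhoBar_eq_sum_poolWeight, NtN_eq_sum_image]
  refine excess_le_of_weighted_bound (fun t _ => poolWeight_nonneg n T t) (sum_poolWeight hm)
    (fun t _ => hopt t) (fun t _ => hB t) (fun t _ => htr t) (fun t _ => hρ t) (by linarith)
    (quarter_le_of_unifBernstein hUB) (by linarith) hβ0 hβ1 (eps_nonneg _ _ _) hK hERM.1 ?_
  simp only [(hopt _).excess_eq]
  linarith [hZ h hERM.1 hstar hstarH, hERM.2 hstar hstarH]

/-- Theorem: minimax upper bound by the oracle procedure.
Let `C₀` be the universal constant of the uniform Bernstein inequality and let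
`t*` minimize `C_ρ (2¹⁰ C₀⁴ C_β (d log(N_t/d) + log(1/δ)) / N_t)^{1/((2-β) ρ̄_t)}`.
Then for any `Π ∈ M`, with probability at least `1 - δ` over `Z ∼ Π`, the ERM over
the aggregated sample `Z^{(t*)}` has target excess risk at most the minimum over
`t ∈ [N+1]` of that quantity. -/
theorem statement1 (C0 : ℝ) (hC0 : 0 < C0) (hUB : UnifBernstein.{u} C0) :
    ∀ (X : Type u) (_ : MeasurableSpace X) (H : Set (X → Bool)) (d : ℕ),
      VCEq H d →
      ∀ (N : ℕ) (n : Fin (N + 1) → ℕ) (ρ : Fin (N + 1) → ℝ) (Cr Cb β : ℝ)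
        (σp : Equiv.Perm (Fin (N + 1))) (δ : ℝ) (tstar : Fin (N + 1)),
        (∀ t : Fin (N + 1), (t : ℕ) < N → 1 ≤ n t) →
        (∀ t, 0 < ρ t) → ρ (Fin.last N) = 1 →
        2 ≤ Cr → 2 ≤ Cb → 0 ≤ β → β ≤ 1 →
        SortedFor ρ σp →
        0 < δ → δ < 1 →
        (∀ t : Fin (N + 1),
          rateB Cr (2 ^ 10 * C0 ^ 4 * Cb) β d δ n ρ σp tstar ≤
            rateB Cr (2 ^ 10 * C0 ^ 4 * Cb) β d δ n ρ σp t) →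
        ∀ P : Fin (N + 1) → Measure (X × Bool), MemClass H P Cr ρ Cb β →
          ENNReal.ofReal (1 - δ) ≤
            msM P n {Z | ∀ h, IsERMAgg H Z ((Finset.Iic tstar).image σp) h →
              excess H (P (Fin.last N)) h ≤
                ⨅ t : Fin (N + 1), rateB Cr (2 ^ 10 * C0 ^ 4 * Cb) β d δ n ρ σp t} :=
  statement1_general C0 hUB

end Paper
end
end

section
/- Exponents of the impossibility construction: For each σ ∈ {+1,−1}, the source P_σ and the source Q_σ have transfer exponents (3, ρ_P) and (3, ρ_Q) respectively with respect to the target D_σ, with ρ_P ≥ log( c_1^{−(2−β)}·n·N_P ) / log( c_0^{−(2−β)}·max{1, n_D} ) and ρ_Q ≤ 1. Furthermore, the three distributions P_σ, Q_σ, D_σ all satisfy the Bernstein class condition with parameters (C_β, β) where C_β = max{ (1/2)·c_0^{−β}, 2 }. -/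
open MeasureTheory Finset

noncomputable section

namespace Paper

universe u

section Aux

variable {X : Type u} [MeasurableSpace X] [MeasurableSingletonClass X]
variable (x0 x1 : X)

lemma indTop (a : ℝ) (S : Set (X × Bool)) (p : X × Bool) :
    ENNReal.ofReal a * S.indicator 1 p ≠ ⊤ := by
  refine ENNReal.mul_ne_top ENNReal.ofReal_ne_top ?_
  by_cases hp : p ∈ S <;> simp [Set.indicator_apply, hp]

lemma twoPt_apply (w η : ℝ) (S : Set (X × Bool)) :
    twoPt x0 x1 w η S =
      ENNReal.ofReal (w * η) * S.indicator 1 (x1, true)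
      + ENNReal.ofReal (w * (1 - η)) * S.indicator 1 (x1, false)
      + ENNReal.ofReal (1 - w) * S.indicator 1 (x0, true) := by
  simp [twoPt, Measure.add_apply, Measure.smul_apply, Measure.dirac_apply, smul_eq_mul]

lemma risk_twoPt (w η : ℝ) (h : X → Bool) :
    risk (twoPt x0 x1 w η) h =
      (if h x1 then max (w * (1 - η)) 0 else max (w * η) 0)
        + (if h x0 then 0 else max (1 - w) 0) := by
  unfold risk
  rw [twoPt_apply]
  rw [ENNReal.toReal_add (ENNReal.add_ne_top.mpr ⟨indTop _ _ _, indTop _ _ _⟩) (indTop _ _ _),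
      ENNReal.toReal_add (indTop _ _ _) (indTop _ _ _)]
  cases hx1 : h x1 <;> cases hx0 : h x0 <;>
    simp [Set.indicator_apply, hx1, hx0, ENNReal.toReal_ofReal'] <;> ring

lemma dis_twoPt (w η : ℝ) (h h' : X → Bool) :
    dis (twoPt x0 x1 w η) h h' =
      (if h x1 = h' x1 then 0 else max (w * η) 0 + max (w * (1 - η)) 0)
        + (if h x0 = h' x0 then 0 else max (1 - w) 0) := by
  unfold dis
  rw [twoPt_apply]
  rw [ENNReal.toReal_add (ENNReal.add_ne_top.mpr ⟨indTop _ _ _, indTop _ _ _⟩) (indTop _ _ _),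
      ENNReal.toReal_add (indTop _ _ _) (indTop _ _ _)]
  by_cases hx1 : h x1 = h' x1 <;> by_cases hx0 : h x0 = h' x0 <;>
    simp [Set.indicator_apply, hx1, hx0, ENNReal.toReal_ofReal'] <;> ring

variable {H : Set (X → Bool)}
variable (hH0 : ∀ h ∈ H, h x0 = true) (hH1 : ∃ h ∈ H, ∃ h' ∈ H, h x1 ≠ h' x1)

include hH1 in
lemma exists_val (σ : Bool) : ∃ h ∈ H, h x1 = σ := by
  obtain ⟨ha, haH, hb, hbH, hne⟩ := hH1
  cases hA : ha x1 <;> cases hB : hb x1 <;> cases σ <;> simp_all <;>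
    first | exact ⟨ha, haH, rfl⟩ | exact ⟨hb, hbH, rfl⟩ |
      exact ⟨ha, haH, hA⟩ | exact ⟨hb, hbH, hB⟩

include hH0 in
lemma risk_core (w a : ℝ) (hw : 0 ≤ w) (ha : 0 ≤ a) (σ : Bool) (h : X → Bool) (hh : h ∈ H) :
    risk (twoPt x0 x1 w (1 / 2 + sgn σ * a)) h =
      if h x1 = σ then w * max (1 / 2 - a) 0 else w * (1 / 2 + a) := by
  rw [risk_twoPt, hH0 h hh]
  have hA : ∀ e : ℝ, e = 2⁻¹ + a → w * e ⊔ 0 = w * (2⁻¹ + a) := fun e he => by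
    rw [he]; exact max_eq_left (by positivity)
  have hB : ∀ e : ℝ, e = 2⁻¹ - a → w * e ⊔ 0 = w * ((2⁻¹ - a) ⊔ 0) := fun e he => by
    rw [he, mul_max_of_nonneg _ _ hw, mul_zero]
  cases σ <;> cases hx1 : h x1 <;> simp [sgn, hx1] <;>
    first | positivity | exact hA _ (by ring) | exact hB _ (by ring)

include hH0 hH1 in
lemma iInf_core (w a : ℝ) (hw : 0 ≤ w) (ha : 0 ≤ a) (σ : Bool) :
    (⨅ h' : H, risk (twoPt x0 x1 w (1 / 2 + sgn σ * a)) (h' : X → Bool)) =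
      w * max (1 / 2 - a) 0 := by
  obtain ⟨hs, hsH, hsv⟩ := exists_val x1 hH1 σ
  haveI : Nonempty ↑H := ⟨⟨hs, hsH⟩⟩
  have hbdd : BddBelow (Set.range fun h' : H => risk (twoPt x0 x1 w (1 / 2 + sgn σ * a)) h') :=
    ⟨0, by rintro r ⟨h', rfl⟩; exact ENNReal.toReal_nonneg⟩
  have hmaxle : max (1 / 2 - a) 0 ≤ 1 / 2 + a := max_le (by linarith) (by linarith)
  apply le_antisymm
  · have := ciInf_le hbdd (⟨hs, hsH⟩ : H)
    rwa [risk_core x0 x1 hH0 w a hw ha σ hs hsH, if_pos hsv] at this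
  · refine le_ciInf fun ⟨h', h'H⟩ => ?_
    rw [risk_core x0 x1 hH0 w a hw ha σ h' h'H]
    by_cases hv : h' x1 = σ
    · rw [if_pos hv]
    · rw [if_neg hv]
      exact mul_le_mul_of_nonneg_left hmaxle hw

include hH0 hH1 in
lemma excess_core (w a : ℝ) (hw : 0 ≤ w) (ha : 0 ≤ a) (σ : Bool) (h : X → Bool) (hh : h ∈ H) :
    excess H (twoPt x0 x1 w (1 / 2 + sgn σ * a)) h =
      if h x1 = σ then 0 else w * (1 / 2 + a) - w * max (1 / 2 - a) 0 := by
  unfold excess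
  rw [iInf_core x0 x1 hH0 hH1 w a hw ha σ, risk_core x0 x1 hH0 w a hw ha σ h hh]
  by_cases hv : h x1 = σ <;> simp [hv]

include hH0 hH1 in
lemma opt_core (w a : ℝ) (hw : 0 ≤ w) (ha : 0 ≤ a) (σ : Bool) :
    ∃ hstar ∈ H, hstar x1 = σ ∧ IsOpt H (twoPt x0 x1 w (1 / 2 + sgn σ * a)) hstar := by
  obtain ⟨hs, hsH, hsv⟩ := exists_val x1 hH1 σ
  refine ⟨hs, hsH, hsv, hsH, fun h' h'H => ?_⟩
  rw [risk_core x0 x1 hH0 w a hw ha σ hs hsH, if_pos hsv,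
      risk_core x0 x1 hH0 w a hw ha σ h' h'H]
  have hmaxle : max (1 / 2 - a) 0 ≤ 1 / 2 + a := max_le (by linarith) (by linarith)
  by_cases hv : h' x1 = σ
  · rw [if_pos hv]
  · rw [if_neg hv]; exact mul_le_mul_of_nonneg_left hmaxle hw

include hH0 in
lemma dis_core (w a : ℝ) (hw : 0 ≤ w) (ha : 0 ≤ a) (σ : Bool) (h : X → Bool) (hh : h ∈ H)
    (hstar : X → Bool) (hsH : hstar ∈ H) (hsv : hstar x1 = σ) :
    dis (twoPt x0 x1 w (1 / 2 + sgn σ * a)) h hstar =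
      if h x1 = σ then 0 else w * (1 / 2 + a) + w * max (1 / 2 - a) 0 := by
  rw [dis_twoPt, hH0 h hh, hH0 hstar hsH, if_pos rfl, add_zero]
  have hA : max (w * (2⁻¹ + a)) 0 = w * (2⁻¹ + a) := max_eq_left (by positivity)
  have hB : ∀ e : ℝ, e = 2⁻¹ - a → w * e ⊔ 0 = w * ((2⁻¹ - a) ⊔ 0) := fun e he => by
    rw [he, mul_max_of_nonneg _ _ hw, mul_zero]
  by_cases hv : h x1 = σ
  · rw [if_pos (hv.trans hsv.symm), if_pos hv]
  · rw [if_neg (fun he => hv (he.trans hsv)), if_neg hv]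
    cases σ <;> simp only [sgn, if_true, if_false, Bool.false_eq_true]
    · rw [show w * (1 / 2 + -1 * a) = w * (2⁻¹ - a) by ring,
          show w * (1 - (1 / 2 + -1 * a)) = w * (2⁻¹ + a) by ring, hB _ rfl, hA]
      norm_num [add_comm]
    · rw [show w * (1 / 2 + 1 * a) = w * (2⁻¹ + a) by ring,
          show w * (1 - (1 / 2 + 1 * a)) = w * (2⁻¹ - a) by ring, hB _ rfl, hA]
      norm_num

include hH0 hH1 in
lemma bern_core (w a Cb b : ℝ) (hw : 0 ≤ w) (ha : 0 ≤ a) (σ : Bool) (hCb : 0 ≤ Cb)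
    (key : w * (1 / 2 + a) + w * max (1 / 2 - a) 0 ≤
      Cb * (w * (1 / 2 + a) - w * max (1 / 2 - a) 0) ^ b) :
    Bernstein H (twoPt x0 x1 w (1 / 2 + sgn σ * a)) Cb b := by
  obtain ⟨hs, hsH, hsv, hopt⟩ := opt_core x0 x1 hH0 hH1 w a hw ha σ
  refine ⟨hs, hopt, fun h hh => ?_⟩
  rw [dis_core x0 x1 hH0 w a hw ha σ h hh hs hsH hsv,
      excess_core x0 x1 hH0 hH1 w a hw ha σ h hh]
  by_cases hv : h x1 = σ
  · rw [if_pos hv, if_pos hv]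
    exact mul_nonneg hCb (Real.rpow_nonneg le_rfl _)
  · rw [if_neg hv, if_neg hv]; exact key

include hH0 hH1 in
lemma transfer_core (wP aP wD aD ρ : ℝ) (hwP : 0 ≤ wP) (haP : 0 ≤ aP)
    (hwD : 0 ≤ wD) (haD : 0 ≤ aD) (σ : Bool)
    (key : wD * (1 / 2 + aD) - wD * max (1 / 2 - aD) 0 ≤
      3 * (wP * (1 / 2 + aP) - wP * max (1 / 2 - aP) 0) ^ (1 / ρ)) :
    Transfer H (twoPt x0 x1 wP (1 / 2 + sgn σ * aP))
      (twoPt x0 x1 wD (1 / 2 + sgn σ * aD)) 3 ρ := by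
  intro h hh
  rw [excess_core x0 x1 hH0 hH1 wD aD hwD haD σ h hh,
      excess_core x0 x1 hH0 hH1 wP aP hwP haP σ h hh]
  by_cases hv : h x1 = σ
  · rw [if_pos hv, if_pos hv]
    exact mul_nonneg (by norm_num) (Real.rpow_nonneg le_rfl _)
  · rw [if_neg hv, if_neg hv]; exact key

end Aux

set_option maxHeartbeats 1600000 in
/-- Proposition: exponents of the impossibility construction.
For each `σ ∈ {±1}`, the sources `P_σ` and `Q_σ` have transfer exponents
`(3, ρ_P)` and `(3, ρ_Q)` with respect to the target `D_σ`, with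
`ρ_P ≥ log(c₁^{-(2-β)} n N_P) / log(c₀^{-(2-β)} (1 ∨ n_D))` and `ρ_Q ≤ 1`;
and all three distributions satisfy the Bernstein class condition with
parameters `(C_β, β)` where `C_β = max{(1/2) c₀^{-β}, 2}`. -/
theorem statement6 {X : Type u} [MeasurableSpace X] [MeasurableSingletonClass X]
    (x0 x1 : X) (hx : x0 ≠ x1)
    (H : Set (X → Bool)) (hH0 : ∀ h ∈ H, h x0 = true)
    (hH1 : ∃ h ∈ H, ∃ h' ∈ H, h x1 ≠ h' x1)
    (β c0 c1 : ℝ) (n nD NP : ℕ)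
    (hβ0 : 0 ≤ β) (hβ1 : β < 1) (hn : 1 ≤ n) (hNP : 1 ≤ NP)
    (hc0 : 0 < c0) (hc0' : c0 ≤ 1 / 4) (hc1 : 0 < c1) (hc1' : c1 ≤ 1 / 64)
    (σ : Bool) :
    (∃ ρP : ℝ,
        plog (c1 ^ (-(2 - β)) * ((n * NP : ℕ) : ℝ)) /
            plog (c0 ^ (-(2 - β)) * max 1 (nD : ℝ)) ≤ ρP ∧
        Transfer H (Psrc x0 x1 β c1 n NP σ) (Dtgt x0 x1 β c0 nD σ) 3 ρP) ∧
    (∃ ρQ : ℝ, ρQ ≤ 1 ∧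
        Transfer H (Qsrc x0 x1 σ) (Dtgt x0 x1 β c0 nD σ) 3 ρQ) ∧
    Bernstein H (Psrc x0 x1 β c1 n NP σ) (max ((1 / 2) * c0 ^ (-β)) 2) β ∧
    Bernstein H (Qsrc x0 x1 σ) (max ((1 / 2) * c0 ^ (-β)) 2) β ∧
    Bernstein H (Dtgt x0 x1 β c0 nD σ) (max ((1 / 2) * c0 ^ (-β)) 2) β := by
  have h2β : (0:ℝ) < 2 - β := by linarith
  have hexp : -(1 / (2 - β)) ≤ 0 := neg_nonpos.mpr (by positivity)
  have h1β : (0:ℝ) ≤ 1 - β := by linarith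
  have hnNP1 : (1:ℝ) ≤ ((n * NP : ℕ) : ℝ) := by
    have : 1 * 1 ≤ n * NP := Nat.mul_le_mul hn hNP
    exact_mod_cast by simpa using this
  set ε := epsSrc β n NP with hεdef
  set ε0 := epsTgt β nD with hε0def
  have hεpos : 0 < ε := Real.rpow_pos_of_pos (by linarith) _
  have hεle1 : ε ≤ 1 := Real.rpow_le_one_of_one_le_of_nonpos hnNP1 hexp
  have hε0pos : 0 < ε0 := Real.rpow_pos_of_pos (lt_of_lt_of_le one_pos (le_max_left _ _)) _
  have hε0le1 : ε0 ≤ 1 := Real.rpow_le_one_of_one_le_of_nonpos (le_max_left _ _) hexp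
  have hεβle1 : ε ^ β ≤ 1 := Real.rpow_le_one hεpos.le hεle1 hβ0
  have hε1βle1 : ε ^ (1 - β) ≤ 1 := Real.rpow_le_one hεpos.le hεle1 h1β
  have hε0βle1 : ε0 ^ β ≤ 1 := Real.rpow_le_one hε0pos.le hε0le1 hβ0
  have hε01βle1 : ε0 ^ (1 - β) ≤ 1 := Real.rpow_le_one hε0pos.le hε0le1 h1β
  have hεmul : ε ^ β * ε ^ (1 - β) = ε := by
    rw [← Real.rpow_add hεpos]; norm_num
  have hε0mul : ε0 ^ β * ε0 ^ (1 - β) = ε0 := by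
    rw [← Real.rpow_add hε0pos]; norm_num
  -- abbreviations
  set wD : ℝ := ε0 ^ β / 2 with hwDdef
  set aD : ℝ := c0 * ε0 ^ (1 - β) with haDdef
  set wP : ℝ := c1 * ε ^ β with hwPdef
  set aP : ℝ := ε ^ (1 - β) with haPdef
  have hwD : 0 ≤ wD := by positivity
  have haD : 0 ≤ aD := by positivity
  have hwP : 0 ≤ wP := by positivity
  have haP : 0 ≤ aP := by positivity
  have haD4 : aD ≤ 1 / 4 := by
    calc aD ≤ (1/4) * 1 := mul_le_mul hc0' hε01βle1 (by positivity) (by norm_num)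
    _ = 1/4 := by norm_num
  have haP1 : aP ≤ 1 := hε1βle1
  have hDeq : Dtgt x0 x1 β c0 nD σ = twoPt x0 x1 wD (1 / 2 + sgn σ * aD) := by
    rw [Dtgt, hwDdef, haDdef, mul_assoc, hε0def]
  have hQeq : Qsrc x0 x1 σ = twoPt x0 x1 1 (1 / 2 + sgn σ * (1/2)) := by
    rw [Qsrc]; congr 1; ring
  have hPeq : Psrc x0 x1 β c1 n NP σ = twoPt x0 x1 wP (1 / 2 + sgn σ * aP) := by
    rw [Psrc, hwPdef, haPdef, hεdef]
  -- excess values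
  have hmaxD : max (1/2 - aD) 0 = 1/2 - aD := max_eq_left (by linarith)
  have hED : wD * (1/2 + aD) - wD * max (1/2 - aD) 0 = c0 * ε0 := by
    rw [hmaxD]
    calc wD * (1/2 + aD) - wD * (1/2 - aD) = c0 * (ε0 ^ β * ε0 ^ (1 - β)) := by
          rw [hwDdef, haDdef]; ring
    _ = c0 * ε0 := by rw [hε0mul]
  have hc0ε0 : c0 * ε0 ≤ 1/4 := by
    calc c0 * ε0 ≤ (1/4) * 1 := mul_le_mul hc0' hε0le1 hε0pos.le (by norm_num)
    _ = 1/4 := by norm_num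
  have hmaxPle : max (1/2 - aP) 0 ≤ 1/2 := max_le (by linarith) (by norm_num)
  have hwPaP : wP * aP = c1 * ε := by
    rw [hwPdef, haPdef, mul_assoc, hεmul]
  have hEPge : c1 * ε ≤ wP * (1/2 + aP) - wP * max (1/2 - aP) 0 := by
    have h1 : wP * max (1/2 - aP) 0 ≤ wP * (1/2) := mul_le_mul_of_nonneg_left hmaxPle hwP
    nlinarith [hwPaP]
  have hcεpos : 0 < c1 * ε := mul_pos hc1 hεpos
  have hcεlt1 : c1 * ε < 1 := by nlinarith
  -- Cβ facts
  have hCb2 : (2:ℝ) ≤ max ((1/2) * c0 ^ (-β)) 2 := le_max_right _ _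
  have hCb1 : (1/2) * c0 ^ (-β) ≤ max ((1/2) * c0 ^ (-β)) 2 := le_max_left _ _
  have hCb0 : (0:ℝ) ≤ max ((1/2) * c0 ^ (-β)) 2 := by linarith
  refine ⟨?_, ?_, ?_, ?_, ?_⟩
  · -- transfer from P
    set L := plog (c1 ^ (-(2 - β)) * ((n * NP : ℕ) : ℝ)) /
        plog (c0 ^ (-(2 - β)) * max 1 (nD : ℝ)) with hLdef
    have hL' : 0 < Real.log (1 / (c1 * ε)) :=
      Real.log_pos ((one_lt_div hcεpos).mpr hcεlt1)
    have hl12 : 0 < Real.log 12 := Real.log_pos (by norm_num)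
    refine ⟨max L (Real.log (1 / (c1 * ε)) / Real.log 12), le_max_left _ _, ?_⟩
    set ρP := max L (Real.log (1 / (c1 * ε)) / Real.log 12) with hρPdef
    have hρPge : Real.log (1 / (c1 * ε)) / Real.log 12 ≤ ρP := le_max_right _ _
    have hρPpos : 0 < ρP := lt_of_lt_of_le (div_pos hL' hl12) hρPge
    have hpow : (1:ℝ)/12 ≤ (c1 * ε) ^ (1 / ρP) := by
      rw [Real.le_rpow_iff_log_le (by norm_num) hcεpos]
      have hlogcε : Real.log (c1 * ε) = -Real.log (1 / (c1 * ε)) := by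
        rw [one_div, Real.log_inv, neg_neg]
      have h5 : Real.log (1 / (c1 * ε)) ≤ ρP * Real.log 12 := (div_le_iff₀ hl12).mp hρPge
      have h6 : (1 / ρP) * Real.log (1 / (c1 * ε)) ≤ Real.log 12 := by
        rw [one_div, inv_mul_le_iff₀ hρPpos]; exact h5
      have h7 : Real.log (1/12 : ℝ) = -Real.log 12 := by rw [one_div, Real.log_inv]
      rw [h7, hlogcε]; linarith
    rw [hDeq, hPeq]
    apply transfer_core x0 x1 hH0 hH1 wP aP wD aD _ hwP haP hwD haD σ
    have h8 : (c1 * ε) ^ (1 / ρP) ≤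
        (wP * (1/2 + aP) - wP * max (1/2 - aP) 0) ^ (1 / ρP) :=
      Real.rpow_le_rpow hcεpos.le hEPge (by positivity)
    rw [hED]
    linarith
  · -- transfer from Q
    refine ⟨1, le_refl 1, ?_⟩
    rw [hDeq, hQeq]
    apply transfer_core x0 x1 hH0 hH1 1 (1/2) wD aD _ (by norm_num) (by norm_num) hwD haD σ
    rw [hED]
    norm_num [Real.one_rpow]
    linarith
  · -- Bernstein P
    rw [hPeq]
    apply bern_core x0 x1 hH0 hH1 wP aP _ β hwP haP σ hCb0
    have h8 : (c1 * ε) ^ β ≤ (wP * (1/2 + aP) - wP * max (1/2 - aP) 0) ^ β :=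
      Real.rpow_le_rpow hcεpos.le hEPge hβ0
    have h9 : (c1 * ε) ^ β = c1 ^ β * ε ^ β := Real.mul_rpow hc1.le hεpos.le
    have h10 : c1 ≤ c1 ^ β := by
      have := Real.rpow_le_rpow_of_exponent_ge hc1 (by linarith) hβ1.le
      rwa [Real.rpow_one] at this
    have h11 : wP * (1/2 + aP) + wP * max (1/2 - aP) 0 ≤ 2 * wP := by
      have h1 : wP * max (1/2 - aP) 0 ≤ wP * (1/2) := mul_le_mul_of_nonneg_left hmaxPle hwP
      nlinarith
    have h12 : 2 * wP ≤ 2 * ((c1 * ε) ^ β) := by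
      rw [h9, hwPdef]
      have : 0 ≤ ε ^ β := by positivity
      nlinarith
    have h13 : 2 * ((c1 * ε) ^ β) ≤
        max ((1/2) * c0 ^ (-β)) 2 * (wP * (1/2 + aP) - wP * max (1/2 - aP) 0) ^ β := by
      have hnn : (0:ℝ) ≤ (c1 * ε) ^ β := by positivity
      nlinarith [Real.rpow_nonneg (le_trans hcεpos.le hEPge) β]
    linarith
  · -- Bernstein Q
    rw [hQeq]
    apply bern_core x0 x1 hH0 hH1 1 (1/2) _ β (by norm_num) (by norm_num) σ hCb0
    norm_num [Real.one_rpow]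
    try linarith
  · -- Bernstein D
    rw [hDeq]
    apply bern_core x0 x1 hH0 hH1 wD aD _ β hwD haD σ hCb0
    rw [hED, hmaxD]
    have hLHS : wD * (1/2 + aD) + wD * (1/2 - aD) = (1/2) * ε0 ^ β := by
      rw [hwDdef]; ring
    have hval : (1/2) * c0 ^ (-β) * ((c0 * ε0) ^ β) = (1/2) * ε0 ^ β := by
      rw [Real.mul_rpow hc0.le hε0pos.le]
      have hone : c0 ^ (-β) * c0 ^ β = 1 := by
        rw [← Real.rpow_add hc0, neg_add_cancel, Real.rpow_zero]
      calc (1:ℝ)/2 * c0 ^ (-β) * (c0 ^ β * ε0 ^ β)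
          = 1/2 * ((c0 ^ (-β) * c0 ^ β) * ε0 ^ β) := by ring
        _ = (1/2) * ε0 ^ β := by rw [hone]; ring
    have hrp : (0:ℝ) ≤ (c0 * ε0) ^ β := by positivity
    have := mul_le_mul_of_nonneg_right hCb1 hrp
    linarith


end Paper
end
end

section
/- Reducing the likelihood-ratio event: Let Z ∼ Γ_− with n > 1, and suppose for some δ_1, δ_2 > 0: (i) P( N̂_+ > N̂_− | N̂_P, N̂_Q )·1{E_P ∩ E_Q} ≥ δ_1·1{E_P ∩ E_Q} almost surely, and (ii) P( ñ_+ > ñ_− ) ≥ δ_2. Then P( N̂_+ ≥ N̂_− and n̂_+ ≥ n̂_− ) ≥ δ_1·( δ_2 − P(E_P^c) − P(E_Q^c) ). -/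
open MeasureTheory Finset

noncomputable section

namespace Paper

universe u

/-!
Write `A = {N̂₊ > N̂₋}`, `B = {ñ₊ > ñ₋}` and `L = {N̂_P = a, N̂_Q = b}`. The target event contains
`A ∩ B`, because `n̂_σ = n N̂_σ + ñ_σ`. Refine `L` by the class vector `K` recording, for every
block, its mixture component if the block is homogeneous and `none` otherwise. Given `K` the blocks
are independent, `A` depends only on the homogeneous blocks and `B` only on the others, so `A` and
`B` are conditionally independent; moreover `P(A ∩ {K})` and `P({K})` are invariant under permuting
the blocks, hence constant on `L`. Summing over `K` gives `P(A ∩ B ∩ L) P(L) = P(A ∩ L) P(B ∩ L)`,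
so (i) yields `δ₁ P(B ∩ L) ≤ P(A ∩ B ∩ L)` for every level `L ⊆ E_P ∩ E_Q`. Summing over these
levels and using `P(B) ≤ P(B ∩ E_P ∩ E_Q) + P(E_Pᶜ) + P(E_Qᶜ)` together with (ii) concludes.
-/

open scoped Classical

section ProductMeasure

variable {ι : Type*} {α : ι → Type*}

def DeterminedOn (C : Set (∀ i, α i)) (p : ι → Prop) (S : Set (∀ i, α i)) : Prop :=
  ∀ ω ∈ C, ∀ ω' ∈ C, (∀ i, p i → ω i = ω' i) → ω ∈ S → ω' ∈ S

lemma determinedOn_univ (C : Set (∀ i, α i)) (p : ι → Prop) :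
    DeterminedOn C p Set.univ :=
  fun _ _ _ _ _ _ => Set.mem_univ _

lemma inter_inter_pi_eq_preimage_restrict {c : ∀ i, Set (α i)} {p : ι → Prop}
    {S T : Set (∀ i, α i)} (hS : DeterminedOn (Set.univ.pi c) p S)
    (hT : DeterminedOn (Set.univ.pi c) (fun i => ¬p i) T) :
    S ∩ T ∩ Set.univ.pi c =
      (fun ω (i : Subtype p) => ω i) ⁻¹'
          ((fun ω (i : Subtype p) => ω i) '' (S ∩ Set.univ.pi c)) ∩
        (fun ω (i : {i // ¬p i}) => ω i) ⁻¹'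
          ((fun ω (i : {i // ¬p i}) => ω i) '' (T ∩ Set.univ.pi c)) := by
  ext ω
  constructor
  · rintro ⟨⟨hωS, hωT⟩, hωC⟩
    exact ⟨⟨ω, ⟨hωS, hωC⟩, rfl⟩, ⟨ω, ⟨hωT, hωC⟩, rfl⟩⟩
  · rintro ⟨⟨ω₁, ⟨hS₁, hC₁⟩, h₁⟩, ⟨ω₂, ⟨hT₂, hC₂⟩, h₂⟩⟩
    have agree₁ : ∀ i, p i → ω₁ i = ω i := fun i hi => congrFun h₁ ⟨i, hi⟩
    have agree₂ : ∀ i, ¬p i → ω₂ i = ω i := fun i hi => congrFun h₂ ⟨i, hi⟩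
    have hωC : ω ∈ Set.univ.pi c := fun i _ => by
      by_cases hi : p i
      · exact agree₁ i hi ▸ hC₁ i trivial
      · exact agree₂ i hi ▸ hC₂ i trivial
    exact ⟨⟨hS ω₁ hC₁ ω hωC agree₁ hS₁, hT ω₂ hC₂ ω hωC agree₂ hT₂⟩, hωC⟩

variable [Fintype ι] [∀ i, MeasurableSpace (α i)] (μ : ∀ i, Measure (α i)) [∀ i, SigmaFinite (μ i)]

lemma pi_preimage_restrict_inter_preimage_restrict (p : ι → Prop)
    (U : Set (∀ i : Subtype p, α i)) (V : Set (∀ i : {i // ¬p i}, α i)) :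
    Measure.pi μ ((fun ω (i : Subtype p) => ω i) ⁻¹' U ∩
        (fun ω (i : {i // ¬p i}) => ω i) ⁻¹' V) =
      Measure.pi (fun i : Subtype p => μ i) U * Measure.pi (fun i : {i // ¬p i} => μ i) V := by
  rw [← Measure.prod_prod, ← (measurePreserving_piEquivPiSubtypeProd μ p).measure_preimage_equiv]
  rfl

theorem pi_inter_inter_mul_pi_eq {c : ∀ i, Set (α i)} {p : ι → Prop} {S T : Set (∀ i, α i)}
    (hS : DeterminedOn (Set.univ.pi c) p S)
    (hT : DeterminedOn (Set.univ.pi c) (fun i => ¬p i) T) :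
    Measure.pi μ (S ∩ T ∩ Set.univ.pi c) * Measure.pi μ (Set.univ.pi c) =
      Measure.pi μ (S ∩ Set.univ.pi c) * Measure.pi μ (T ∩ Set.univ.pi c) := by
  have key : ∀ {U V : Set (∀ i, α i)}, DeterminedOn (Set.univ.pi c) p U →
      DeterminedOn (Set.univ.pi c) (fun i => ¬p i) V →
      Measure.pi μ (U ∩ V ∩ Set.univ.pi c) =
        Measure.pi (fun i : Subtype p => μ i) ((fun ω i => ω i) '' (U ∩ Set.univ.pi c)) *
          Measure.pi (fun i : {i // ¬p i} => μ i) ((fun ω i => ω i) '' (V ∩ Set.univ.pi c)) :=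
    fun hU hV => by
      rw [inter_inter_pi_eq_preimage_restrict hU hV, pi_preimage_restrict_inter_preimage_restrict]
  have hC := key (determinedOn_univ _ p) (determinedOn_univ _ fun i => ¬p i)
  have hSC := key hS (determinedOn_univ _ fun i => ¬p i)
  have hTC := key (determinedOn_univ _ p) hT
  simp only [Set.inter_univ, Set.univ_inter] at hC hSC hTC
  rw [key hS hT, hC, hSC, hTC]
  ring

end ProductMeasure

lemma pi_preimage_comp_perm {ι β : Type*} [Fintype ι] [MeasurableSpace β] (ν : Measure β)
    [SigmaFinite ν] (τ : Equiv.Perm ι) (S : Set (ι → β)) :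
    Measure.pi (fun _ : ι => ν) ((· ∘ τ) ⁻¹' S) = Measure.pi (fun _ : ι => ν) S := by
  have hτ : ⇑(MeasurableEquiv.piCongrLeft (fun _ : ι => β) τ.symm) = (· ∘ τ) := by
    ext ω t
    simpa using MeasurableEquiv.piCongrLeft_apply_apply (β := fun _ => β) τ.symm ω (τ t)
  rw [← hτ]
  exact (measurePreserving_piCongrLeft (fun _ : ι => ν) τ.symm).measure_preimage_equiv S

lemma exists_perm_comp_eq_of_ncard_eq {α β : Type*} [Fintype α] {f g : α → β}
    (h : ∀ b, {a | f a = b}.ncard = {a | g a = b}.ncard) :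
    ∃ τ : Equiv.Perm α, f ∘ τ = g := by
  have e : ∀ b, {a // g a = b} ≃ {a // f a = b} := fun b =>
    Fintype.equivOfCardEq <| by
      simpa [Fintype.card_subtype, Set.ncard_eq_toFinset_card'] using (h b).symm
  exact ⟨Equiv.ofFiberEquiv e, funext fun a => Equiv.ofFiberEquiv_map e a⟩

theorem sum_mul_sum_eq_of_mul_eq_of_const {ι R : Type*} [CommSemiring R] {s : Finset ι}
    {x y z w : ι → R} (hxw : ∀ k ∈ s, x k * w k = y k * z k)
    (hy : ∀ k ∈ s, ∀ k' ∈ s, y k = y k') (hw : ∀ k ∈ s, ∀ k' ∈ s, w k = w k') :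
    (∑ k ∈ s, x k) * ∑ k ∈ s, w k = (∑ k ∈ s, y k) * ∑ k ∈ s, z k := by
  simp only [Finset.sum_mul_sum]
  calc ∑ k ∈ s, ∑ k' ∈ s, x k * w k' = ∑ k ∈ s, ∑ k' ∈ s, y k' * z k := by
        refine Finset.sum_congr rfl fun k hk => Finset.sum_congr rfl fun k' hk' => ?_
        rw [hw k' hk' k hk, hxw k hk, hy k hk k' hk']
    _ = ∑ k ∈ s, ∑ k' ∈ s, y k * z k' := Finset.sum_comm

section Fibers

variable {Ω V : Type*} [MeasurableSpace Ω] {f : Ω → V}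

lemma measure_inter_preimage_finset (μ : Measure Ω) {s : Finset V}
    (hf : ∀ v ∈ s, MeasurableSet (f ⁻¹' {v})) (S : Set Ω) :
    μ (S ∩ f ⁻¹' s) = ∑ v ∈ s, μ (S ∩ f ⁻¹' {v}) := by
  have hs : MeasurableSet (f ⁻¹' s) := by
    rw [← Finset.set_biUnion_preimage_singleton]
    exact Finset.measurableSet_biUnion s hf
  rw [Set.inter_comm, ← Measure.restrict_apply hs, ← sum_measure_preimage_singleton s hf]
  exact Finset.sum_congr rfl fun v hv => by rw [Measure.restrict_apply (hf v hv), Set.inter_comm]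

lemma mul_measureReal_inter_preimage_le {μ : Measure Ω} [IsFiniteMeasure μ] {s : Finset V}
    (hfs : ∀ ω, f ω ∈ s) (hf : ∀ v ∈ s, MeasurableSet (f ⁻¹' {v})) {B D : Set Ω} {G : Set V}
    {δ : ℝ} (h : ∀ v ∈ G, δ * μ.real (B ∩ f ⁻¹' {v}) ≤ μ.real (D ∩ f ⁻¹' {v})) :
    δ * μ.real (B ∩ f ⁻¹' G) ≤ μ.real (D ∩ f ⁻¹' G) := by
  have hG : f ⁻¹' G = f ⁻¹' ↑(s.filter (· ∈ G)) := by ext ω; simp [hfs]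
  have hf' : ∀ v ∈ s.filter (· ∈ G), MeasurableSet (f ⁻¹' {v}) :=
    fun v hv => hf v (Finset.mem_filter.1 hv).1
  simp only [hG, measureReal_def, measure_inter_preimage_finset μ hf',
    ENNReal.toReal_sum (fun _ _ => measure_ne_top _ _), Finset.mul_sum]
  exact Finset.sum_le_sum fun v hv => h v (Finset.mem_filter.1 hv).2

end Fibers

lemma measureReal_le_inter_inter_add_compl_add_compl {Ω : Type*} [MeasurableSpace Ω]
    {μ : Measure Ω} [IsFiniteMeasure μ] (B E F : Set Ω) :
    μ.real B ≤ μ.real (B ∩ (E ∩ F)) + μ.real Eᶜ + μ.real Fᶜ :=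
  calc μ.real B ≤ μ.real (B ∩ (E ∩ F) ∪ Eᶜ ∪ Fᶜ) := measureReal_mono fun ω hω => by
        by_cases hE : ω ∈ E <;> by_cases hF : ω ∈ F <;> simp [hω, hE, hF]
    _ ≤ _ := (measureReal_union_le _ _).trans (by gcongr; exact measureReal_union_le _ _)

lemma mul_measureReal_inter_le_of_mul_eq {Ω : Type*} [MeasurableSpace Ω] {μ : Measure Ω}
    [IsFiniteMeasure μ] {A B L : Set Ω} (hAB : μ (A ∩ B ∩ L) * μ L = μ (A ∩ L) * μ (B ∩ L))
    {δ : ℝ} (hA : δ * μ.real L ≤ μ.real (A ∩ L)) :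
    δ * μ.real (B ∩ L) ≤ μ.real (A ∩ B ∩ L) := by
  have hAB' : μ.real (A ∩ B ∩ L) * μ.real L = μ.real (A ∩ L) * μ.real (B ∩ L) := by
    simp only [measureReal_def, ← ENNReal.toReal_mul, hAB]
  rcases (measureReal_nonneg (μ := μ) (s := L)).eq_or_lt with hL | hL
  · have hBL : μ.real (B ∩ L) = 0 :=
      le_antisymm (hL ▸ measureReal_mono Set.inter_subset_right) measureReal_nonneg
    simp [hBL]
  · refine le_of_mul_le_mul_right ?_ hL
    calc δ * μ.real (B ∩ L) * μ.real L = δ * μ.real L * μ.real (B ∩ L) := by ring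
      _ ≤ μ.real (A ∩ L) * μ.real (B ∩ L) := by gcongr
      _ = μ.real (A ∩ B ∩ L) * μ.real L := hAB'.symm

lemma prod_preimage_fst_mul_eq {Ω Y : Type*} [MeasurableSpace Ω] [MeasurableSpace Y]
    {μ : Measure Ω} {ν : Measure Y} [SFinite ν] {A B L : Set Ω}
    (hAB : μ (A ∩ B ∩ L) * μ L = μ (A ∩ L) * μ (B ∩ L)) :
    μ.prod ν (Prod.fst ⁻¹' (A ∩ B ∩ L)) * μ.prod ν (Prod.fst ⁻¹' L) =
      μ.prod ν (Prod.fst ⁻¹' (A ∩ L)) * μ.prod ν (Prod.fst ⁻¹' (B ∩ L)) := by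
  simp only [← Set.prod_univ, Measure.prod_prod]
  calc μ (A ∩ B ∩ L) * ν Set.univ * (μ L * ν Set.univ)
      = μ (A ∩ B ∩ L) * μ L * (ν Set.univ * ν Set.univ) := by ring
    _ = μ (A ∩ L) * ν Set.univ * (μ (B ∩ L) * ν Set.univ) := by rw [hAB]; ring

section Blocks

variable {X : Type u} (x1 : X) {n Nn : ℕ}

def IsHomBlock (z : Fin n → X × Bool) : Prop := ∃ b, ∀ i, z i = (x1, b)

def blockCount (σ : Bool) (z : Fin n → X × Bool) : ℕ := #{i | z i = (x1, σ)}

lemma blockCount_eq (σ : Bool) (z : Fin n → X × Bool) :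
    blockCount x1 σ z =
      (if ∀ i, z i = (x1, σ) then n else 0) + if IsHomBlock x1 z then 0 else blockCount x1 σ z := by
  by_cases hσ : ∀ i, z i = (x1, σ)
  · rw [if_pos hσ, if_pos ⟨σ, hσ⟩, blockCount, Finset.filter_true_of_mem fun i _ => hσ i]
    simp
  by_cases hz : IsHomBlock x1 z
  · obtain ⟨b, hb⟩ := hz
    have hbσ : b ≠ σ := by rintro rfl; exact hσ hb
    rw [if_neg hσ, if_pos ⟨b, hb⟩, blockCount, Finset.card_eq_zero,
      Finset.filter_false_of_mem fun i _ => by simp [hb i, hbσ]]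
  · rw [if_neg hσ, if_neg hz, zero_add]

lemma nhatS_eq (Zb : Fin Nn → Fin n → X × Bool) (σ : Bool) :
    nhatS x1 Zb σ = n * NhatS x1 Zb σ +
      ∑ t, if IsHomBlock x1 (Zb t) then 0 else blockCount x1 σ (Zb t) := by
  have hn : nhatS x1 Zb σ = ∑ t, blockCount x1 σ (Zb t) := by
    simp only [nhatS, blockCount, Set.ncard_eq_toFinset_card', Set.toFinset_ofPred]
    rw [Finset.card_filter, Fintype.sum_prod_type]
    simp only [Finset.card_filter]
  have hN : n * NhatS x1 Zb σ = ∑ t, if ∀ i, Zb t i = (x1, σ) then n else 0 := by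
    simp only [NhatS, Set.ncard_eq_toFinset_card', Set.toFinset_ofPred]
    rw [Finset.card_filter, Finset.mul_sum]
    simp
  rw [hn, hN, ← Finset.sum_add_distrib]
  exact Finset.sum_congr rfl fun t _ => blockCount_eq x1 σ (Zb t)

lemma ntildeS_eq_sum (Zb : Fin Nn → Fin n → X × Bool) (σ : Bool) :
    ntildeS x1 Zb σ = ∑ t, if IsHomBlock x1 (Zb t) then 0 else blockCount x1 σ (Zb t) := by
  rw [ntildeS, nhatS_eq, Nat.add_sub_cancel_left]

def blockClass (z : Bool × (Fin n → X × Bool)) : Option Bool :=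
  if IsHomBlock x1 z.2 then some z.1 else none

def blockClasses (ω : Fin Nn → Bool × (Fin n → X × Bool)) (t : Fin Nn) : Option Bool :=
  blockClass x1 (ω t)

lemma blockClass_eq_some {z : Bool × (Fin n → X × Bool)} {b : Bool} :
    blockClass x1 z = some b ↔ IsHomBlock x1 z.2 ∧ z.1 = b := by
  unfold blockClass; split_ifs with h <;> simp [h]

lemma blockClass_eq_none {z : Bool × (Fin n → X × Bool)} :
    blockClass x1 z = none ↔ ¬IsHomBlock x1 z.2 := by
  unfold blockClass; split_ifs with h <;> simp [h]

lemma NhatP_eq_ncard (ω : Fin Nn → Bool × (Fin n → X × Bool)) :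
    NhatP x1 ω = {t | blockClasses x1 ω t = some true}.ncard := by
  simp only [NhatP, blockClasses, blockClass_eq_some, and_comm]
  rfl

lemma NhatQ_eq_ncard (ω : Fin Nn → Bool × (Fin n → X × Bool)) :
    NhatQ x1 ω = {t | blockClasses x1 ω t = some false}.ncard := by
  simp only [NhatQ, blockClasses, blockClass_eq_some, and_comm]
  rfl

def homMajority : Set (Fin Nn → Bool × (Fin n → X × Bool)) :=
  {ω | NhatS x1 (fun t => (ω t).2) false < NhatS x1 (fun t => (ω t).2) true}

def restMajority : Set (Fin Nn → Bool × (Fin n → X × Bool)) :=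
  {ω | ntildeS x1 (fun t => (ω t).2) false < ntildeS x1 (fun t => (ω t).2) true}

def homLevel (a b : ℕ) : Set (Fin Nn → Bool × (Fin n → X × Bool)) :=
  {ω | NhatP x1 ω = a ∧ NhatQ x1 ω = b}

def classLevel (a b : ℕ) : Set (Fin Nn → Option Bool) :=
  {K | {t | K t = some true}.ncard = a ∧ {t | K t = some false}.ncard = b}

lemma homLevel_eq_preimage (a b : ℕ) :
    (homLevel x1 a b : Set (Fin Nn → Bool × (Fin n → X × Bool))) =
      blockClasses x1 ⁻¹' classLevel a b := by
  ext ω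
  simp [homLevel, classLevel, NhatP_eq_ncard, NhatQ_eq_ncard]

lemma ncard_fiber_eq_of_mem_classLevel {a b : ℕ} {K K' : Fin Nn → Option Bool}
    (hK : K ∈ classLevel a b) (hK' : K' ∈ classLevel a b) (c : Option Bool) :
    {t | K t = c}.ncard = {t | K' t = c}.ncard := by
  have total : ∀ K : Fin Nn → Option Bool,
      {t | K t = none}.ncard + {t | K t = some true}.ncard + {t | K t = some false}.ncard = Nn := by
    intro K
    have := Finset.card_eq_sum_card_fiberwise (s := Finset.univ) (t := Finset.univ)
      (fun t _ => Finset.mem_univ (K t))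
    simpa [Set.ncard_eq_toFinset_card', Fintype.sum_option, add_assoc] using this.symm
  have h := total K
  have h' := total K'
  obtain ⟨hKa, hKb⟩ := hK
  obtain ⟨hKa', hKb'⟩ := hK'
  rcases c with _ | _ | _ <;> omega

lemma homMajority_inter_restMajority_subset :
    homMajority x1 ∩ restMajority x1 ⊆ {ω : Fin Nn → Bool × (Fin n → X × Bool) |
      NhatS x1 (fun t => (ω t).2) false ≤ NhatS x1 (fun t => (ω t).2) true ∧
        nhatS x1 (fun t => (ω t).2) false ≤ nhatS x1 (fun t => (ω t).2) true} := by
  rintro ω ⟨hhom, hrest⟩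
  simp only [homMajority, restMajority, Set.mem_ofPred_eq, ntildeS_eq_sum] at hhom hrest
  refine ⟨hhom.le, ?_⟩
  rw [nhatS_eq, nhatS_eq]
  exact add_le_add (Nat.mul_le_mul_left n hhom.le) hrest.le

end Blocks

section Measurability

variable {X : Type u} [MeasurableSpace X] [MeasurableSingletonClass X] (x1 : X) {n Nn : ℕ}

lemma measurableSet_preimage_blockClasses (T : Set (Fin Nn → Option Bool)) :
    MeasurableSet (blockClasses x1 (n := n) ⁻¹' T) := by
  -- `blockClasses` factors through the finitely valued record of which points equal `(x1, σ)`
  have hcode : Measurable fun (ω : Fin Nn → Bool × (Fin n → X × Bool)) (t : Fin Nn) =>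
      ((ω t).1, fun i σ => (ω t).2 i = (x1, σ)) :=
    measurable_pi_lambda _ fun t => (measurable_fst.comp (measurable_pi_apply t)).prodMk <|
      measurable_pi_lambda _ fun i => measurable_pi_lambda _ fun σ =>
        measurableSet_setOfPred.1 <| (measurable_pi_apply i).comp
          (measurable_snd.comp (measurable_pi_apply t)) (measurableSet_singleton _)
  convert hcode (Set.toFinite ((fun (V : Fin Nn → Bool × (Fin n → Bool → Prop)) t =>
    if ∃ b, ∀ i, (V t).2 i b then some (V t).1 else none) ⁻¹' T)).measurableSet using 1
  ext ω
  simp only [Set.mem_preimage]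
  congr! 2 with t
  simp only [blockClasses, blockClass, IsHomBlock]
  by_cases h : ∃ b, ∀ i, (ω t).2 i = (x1, b) <;> simp [h]

lemma measurableSet_homLevel (a b : ℕ) :
    MeasurableSet (homLevel x1 a b : Set (Fin Nn → Bool × (Fin n → X × Bool))) := by
  rw [homLevel_eq_preimage]
  exact measurableSet_preimage_blockClasses x1 _

end Measurability

section ConditionalIndependence

variable {X : Type u} (x1 : X) {n Nn : ℕ}

lemma preimage_blockClasses_singleton (K : Fin Nn → Option Bool) :
    blockClasses x1 (n := n) ⁻¹' {K} = Set.univ.pi fun t => blockClass x1 ⁻¹' {K t} := by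
  ext ω
  simp [blockClasses, funext_iff]

lemma determinedOn_homMajority (K : Fin Nn → Option Bool) :
    DeterminedOn (Set.univ.pi fun t => blockClass x1 ⁻¹' {K t}) (fun t => K t ≠ none)
      (homMajority (n := n) x1) := by
  intro ω hω ω' hω' hagree
  suffices h : ∀ σ, NhatS x1 (fun t => (ω t).2) σ = NhatS x1 (fun t => (ω' t).2) σ by
    simp only [homMajority, Set.mem_ofPred_eq, h]; exact id
  intro σ
  unfold NhatS
  congr 1
  ext t
  by_cases hK : K t = none
  · have hom : ∀ ω : Fin Nn → Bool × (Fin n → X × Bool),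
        ω ∈ Set.univ.pi (fun t => blockClass x1 ⁻¹' {K t}) → ¬∀ i, (ω t).2 i = (x1, σ) :=
      fun ω hω h => (blockClass_eq_none x1).1 ((hω t trivial).trans hK) ⟨σ, h⟩
    simp only [Set.mem_ofPred_eq, hom ω hω, hom ω' hω']
  · simp only [Set.mem_ofPred_eq, hagree t hK]

lemma determinedOn_restMajority (K : Fin Nn → Option Bool) :
    DeterminedOn (Set.univ.pi fun t => blockClass x1 ⁻¹' {K t}) (fun t => ¬K t ≠ none)
      (restMajority (n := n) x1) := by
  intro ω hω ω' hω' hagree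
  suffices h : ∀ σ, ntildeS x1 (fun t => (ω t).2) σ = ntildeS x1 (fun t => (ω' t).2) σ by
    simp only [restMajority, Set.mem_ofPred_eq, h]; exact id
  intro σ
  simp only [ntildeS_eq_sum]
  refine Finset.sum_congr rfl fun t _ => ?_
  by_cases hK : K t = none
  · rw [hagree t (not_not.2 hK)]
  · obtain ⟨b, hb⟩ := Option.ne_none_iff_exists'.1 hK
    have hom : ∀ ω : Fin Nn → Bool × (Fin n → X × Bool),
        ω ∈ Set.univ.pi (fun t => blockClass x1 ⁻¹' {K t}) → IsHomBlock x1 (ω t).2 :=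
      fun ω hω => ((blockClass_eq_some x1).1 ((hω t trivial).trans hb)).1
    rw [if_pos (hom ω hω), if_pos (hom ω' hω')]

lemma comp_perm_mem_homMajority_iff (τ : Equiv.Perm (Fin Nn))
    (ω : Fin Nn → Bool × (Fin n → X × Bool)) :
    ω ∘ τ ∈ homMajority x1 ↔ ω ∈ homMajority x1 := by
  have h : ∀ σ, NhatS x1 (fun t => ((ω ∘ τ) t).2) σ = NhatS x1 (fun t => (ω t).2) σ := fun σ =>
    Set.ncard_preimage_of_injective_subset_range (s := {t | ∀ i, (ω t).2 i = (x1, σ)})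
      τ.injective (by simp)
  simp only [homMajority, Set.mem_ofPred_eq, h]

variable [MeasurableSpace X] (μb : Measure (Bool × (Fin n → X × Bool))) [IsFiniteMeasure μb]

lemma pi_inter_preimage_blockClasses_eq {S : Set (Fin Nn → Bool × (Fin n → X × Bool))}
    (hS : ∀ (τ : Equiv.Perm (Fin Nn)) ω, ω ∘ τ ∈ S ↔ ω ∈ S) {K K' : Fin Nn → Option Bool}
    (hKK' : ∀ c, {t | K t = c}.ncard = {t | K' t = c}.ncard) :
    Measure.pi (fun _ => μb) (S ∩ blockClasses x1 ⁻¹' {K}) =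
      Measure.pi (fun _ => μb) (S ∩ blockClasses x1 ⁻¹' {K'}) := by
  obtain ⟨τ, hτ⟩ := exists_perm_comp_eq_of_ncard_eq fun c => (hKK' c).symm
  rw [← pi_preimage_comp_perm μb τ]
  congr 1
  ext ω
  simp only [Set.mem_inter_iff, Set.mem_preimage, Set.mem_singleton_iff, hS, ← hτ]
  exact and_congr_right fun _ => τ.surjective.injective_comp_right.eq_iff (a := blockClasses x1 ω)

theorem pi_homMajority_inter_restMajority_inter_homLevel_mul [MeasurableSingletonClass X]
    (a b : ℕ) :
    Measure.pi (fun _ : Fin Nn => μb) (homMajority x1 ∩ restMajority x1 ∩ homLevel x1 a b) *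
        Measure.pi (fun _ : Fin Nn => μb) (homLevel x1 a b) =
      Measure.pi (fun _ : Fin Nn => μb) (homMajority x1 ∩ homLevel x1 a b) *
        Measure.pi (fun _ : Fin Nn => μb) (restMajority x1 ∩ homLevel x1 a b) := by
  set μ := Measure.pi fun _ : Fin Nn => μb
  set s := Finset.univ.filter (· ∈ classLevel (Nn := Nn) a b)
  have hsum : ∀ S, μ (S ∩ homLevel x1 a b) = ∑ K ∈ s, μ (S ∩ blockClasses x1 ⁻¹' {K}) := by
    intro S
    rw [homLevel_eq_preimage, ← measure_inter_preimage_finset μ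
      (fun K _ => measurableSet_preimage_blockClasses x1 _)]
    simp [s]
  have hL : μ (homLevel x1 a b) = ∑ K ∈ s, μ (blockClasses x1 ⁻¹' {K}) := by
    simpa using hsum Set.univ
  rw [hsum, hL, hsum, hsum]
  have hcount : ∀ K ∈ s, ∀ K' ∈ s, ∀ c, {t | K t = c}.ncard = {t | K' t = c}.ncard :=
    fun K hK K' hK' => ncard_fiber_eq_of_mem_classLevel (Finset.mem_filter.1 hK).2
      (Finset.mem_filter.1 hK').2
  refine sum_mul_sum_eq_of_mul_eq_of_const (fun K _ => ?_) (fun K hK K' hK' => ?_)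
    (fun K hK K' hK' => ?_)
  · rw [preimage_blockClasses_singleton]
    exact pi_inter_inter_mul_pi_eq _ (determinedOn_homMajority x1 K)
      (determinedOn_restMajority x1 K)
  · exact pi_inter_preimage_blockClasses_eq x1 μb (comp_perm_mem_homMajority_iff x1)
      (hcount K hK K' hK')
  · simpa using pi_inter_preimage_blockClasses_eq x1 μb (S := Set.univ) (by simp)
      (hcount K hK K' hK')

end ConditionalIndependence

section Levels

variable {X : Type u} [MeasurableSpace X] [MeasurableSingletonClass X] (x1 : X) {n Nn : ℕ}
  (μb : Measure (Bool × (Fin n → X × Bool))) [IsFiniteMeasure μb]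
  {Y : Type*} [MeasurableSpace Y] (ν : Measure Y) [IsFiniteMeasure ν]

theorem mul_measureReal_restMajority_inter_le
    {E : Set ((Fin Nn → Bool × (Fin n → X × Bool)) × Y)}
    (hE : ∀ W ∈ E, ∀ W', NhatP x1 W'.1 = NhatP x1 W.1 → NhatQ x1 W'.1 = NhatQ x1 W.1 → W' ∈ E)
    {δ : ℝ} (hA : ∀ a b : ℕ, Prod.fst ⁻¹' homLevel x1 a b ⊆ E →
      δ * ((Measure.pi fun _ : Fin Nn => μb).prod ν).real (Prod.fst ⁻¹' homLevel x1 a b) ≤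
        ((Measure.pi fun _ : Fin Nn => μb).prod ν).real
          (Prod.fst ⁻¹' (homMajority x1 ∩ homLevel x1 a b))) :
    δ * ((Measure.pi fun _ : Fin Nn => μb).prod ν).real (Prod.fst ⁻¹' restMajority x1 ∩ E) ≤
      ((Measure.pi fun _ : Fin Nn => μb).prod ν).real
        (Prod.fst ⁻¹' (homMajority x1 ∩ restMajority x1) ∩ E) := by
  set f := fun W : (Fin Nn → Bool × (Fin n → X × Bool)) × Y => (NhatP x1 W.1, NhatQ x1 W.1)
  have hfib : ∀ v : ℕ × ℕ, f ⁻¹' {v} = Prod.fst ⁻¹' homLevel x1 v.1 v.2 := fun v => by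
    ext W; simp [f, homLevel, Prod.ext_iff]
  have hEf : E = f ⁻¹' (f '' E) := by
    refine (Set.subset_preimage_image _ _).antisymm ?_
    rintro W ⟨W', hW', hf⟩
    exact hE W' hW' W (congrArg Prod.fst hf).symm (congrArg Prod.snd hf).symm
  have hfs : ∀ W, f W ∈ Finset.range (Nn + 1) ×ˢ Finset.range (Nn + 1) := fun W => by
    simp only [f, Finset.mem_product, Finset.mem_range, Nat.lt_succ_iff]
    exact ⟨(Set.ncard_le_card _).trans (by simp), (Set.ncard_le_card _).trans (by simp)⟩
  rw [hEf]
  refine mul_measureReal_inter_preimage_le hfs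
    (fun v _ => hfib v ▸ measurable_fst (measurableSet_homLevel x1 _ _)) ?_
  rintro ⟨a, b⟩ hv
  rw [hfib, ← Set.preimage_inter, ← Set.preimage_inter]
  refine mul_measureReal_inter_le_of_mul_eq (prod_preimage_fst_mul_eq
    (pi_homMajority_inter_restMajority_inter_homLevel_mul x1 μb a b)) (hA a b ?_)
  rw [hEf]
  rintro W ⟨rfl, rfl⟩
  exact hv

end Levels

instance isFiniteMeasure_ofReal_smul {α : Type*} [MeasurableSpace α] (r : ℝ) (μ : Measure α)
    [IsFiniteMeasure μ] : IsFiniteMeasure (ENNReal.ofReal r • μ) :=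
  μ.smul_finite ENNReal.ofReal_ne_top

instance isFiniteMeasure_twoPt {X : Type u} [MeasurableSpace X] (x0 x1 : X) (w η : ℝ) :
    IsFiniteMeasure (twoPt x0 x1 w η) := by
  unfold twoPt; infer_instance

instance isFiniteMeasure_blockJ {X : Type u} [MeasurableSpace X] (x0 x1 : X) (β c1 : ℝ)
    (n NP NQ : ℕ) (σ : Bool) : IsFiniteMeasure (blockJ x0 x1 β c1 n NP NQ σ) := by
  unfold blockJ Psrc Qsrc; infer_instance

instance isFiniteMeasure_tgtM {X : Type u} [MeasurableSpace X] (x0 x1 : X) (β c0 : ℝ) (nD : ℕ)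
    (σ : Bool) : IsFiniteMeasure (tgtM x0 x1 β c0 nD σ) := by
  unfold tgtM Dtgt; infer_instance

instance isFiniteMeasure_GammaJ {X : Type u} [MeasurableSpace X] (x0 x1 : X) (β c0 c1 : ℝ)
    (n nD NP NQ : ℕ) (σ : Bool) : IsFiniteMeasure (GammaJ x0 x1 β c0 c1 n nD NP NQ σ) := by
  unfold GammaJ; infer_instance

theorem statement8_general {X : Type u} [MeasurableSpace X] [MeasurableSingletonClass X]
    (x0 x1 : X)
    (β c0 c1 : ℝ) (n nD NP NQ : ℕ)
    (δ1 δ2 : ℝ) (hδ1 : 0 < δ1)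
    (EP EQ : Set ((Fin (NP + NQ) → Bool × (Fin n → X × Bool)) × (Fin nD → X × Bool)))
    (hEP : EP = {W |
      (∫ W', (NhatP x1 W'.1 : ℝ) ∂(GammaJ x0 x1 β c0 c1 n nD NP NQ false)) / 2
          ≤ (NhatP x1 W.1 : ℝ) ∧
      (NhatP x1 W.1 : ℝ)
          ≤ 2 * ∫ W', (NhatP x1 W'.1 : ℝ) ∂(GammaJ x0 x1 β c0 c1 n nD NP NQ false)})
    (hEQ : EQ = {W |
      (NhatQ x1 W.1 : ℝ)
          ≤ 2 * ∫ W', (NhatQ x1 W'.1 : ℝ) ∂(GammaJ x0 x1 β c0 c1 n nD NP NQ false)})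
    -- (i): conditionally on each level set of `(N̂_P, N̂_Q)` contained in `E_P ∩ E_Q`
    (hi : ∀ a b : ℕ,
      {W : (Fin (NP + NQ) → Bool × (Fin n → X × Bool)) × (Fin nD → X × Bool) |
          NhatP x1 W.1 = a ∧ NhatQ x1 W.1 = b} ⊆ EP ∩ EQ →
      δ1 * (GammaJ x0 x1 β c0 c1 n nD NP NQ false
          {W | NhatP x1 W.1 = a ∧ NhatQ x1 W.1 = b}).toReal ≤
        (GammaJ x0 x1 β c0 c1 n nD NP NQ false
          ({W | NhatS x1 (fun t => (W.1 t).2) false < NhatS x1 (fun t => (W.1 t).2) true}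
            ∩ {W | NhatP x1 W.1 = a ∧ NhatQ x1 W.1 = b})).toReal)
    -- (ii)
    (hii : δ2 ≤ (GammaJ x0 x1 β c0 c1 n nD NP NQ false
        {W | ntildeS x1 (fun t => (W.1 t).2) false <
             ntildeS x1 (fun t => (W.1 t).2) true}).toReal) :
    δ1 * (δ2 - (GammaJ x0 x1 β c0 c1 n nD NP NQ false EPᶜ).toReal
            - (GammaJ x0 x1 β c0 c1 n nD NP NQ false EQᶜ).toReal) ≤
      (GammaJ x0 x1 β c0 c1 n nD NP NQ false
        {W | NhatS x1 (fun t => (W.1 t).2) false ≤ NhatS x1 (fun t => (W.1 t).2) true ∧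
             nhatS x1 (fun t => (W.1 t).2) false ≤
               nhatS x1 (fun t => (W.1 t).2) true}).toReal := by
  set Γ := GammaJ x0 x1 β c0 c1 n nD NP NQ false
  have hE : ∀ W ∈ EP ∩ EQ, ∀ W', NhatP x1 W'.1 = NhatP x1 W.1 → NhatQ x1 W'.1 = NhatQ x1 W.1 →
      W' ∈ EP ∩ EQ := by
    subst hEP hEQ
    intro W hW W' hP hQ
    simpa [hP, hQ] using hW
  have hsum := mul_measureReal_restMajority_inter_le x1 _ _ hE hi
  have hunion := measureReal_le_inter_inter_add_compl_add_compl (μ := Γ)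
    (Prod.fst ⁻¹' restMajority x1) EP EQ
  calc δ1 * (δ2 - Γ.real EPᶜ - Γ.real EQᶜ)
      ≤ δ1 * Γ.real (Prod.fst ⁻¹' restMajority x1 ∩ (EP ∩ EQ)) := by
        gcongr
        linarith [show δ2 ≤ Γ.real (Prod.fst ⁻¹' restMajority x1) from hii]
    _ ≤ _ := hsum.trans <| measureReal_mono <| Set.inter_subset_left.trans fun W hW =>
        homMajority_inter_restMajority_subset x1 hW

/-- Proposition: reducing the likelihood-ratio event.
Let `Z ∼ Γ₋` (augmented with the latent mixture-component indicators), `n > 1`,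
and suppose (i) `P(N̂₊ > N̂₋ | N̂_P, N̂_Q) 1{E_P ∩ E_Q} ≥ δ₁ 1{E_P ∩ E_Q}` a.s.
(stated on the level sets of the discrete pair `(N̂_P, N̂_Q)`), and
(ii) `P(ñ₊ > ñ₋) ≥ δ₂`.  Then
`P(N̂₊ ≥ N̂₋ ∧ n̂₊ ≥ n̂₋) ≥ δ₁ (δ₂ - P(E_Pᶜ) - P(E_Qᶜ))`. -/
theorem statement8 {X : Type u} [MeasurableSpace X] [MeasurableSingletonClass X]
    (x0 x1 : X) (hx : x0 ≠ x1)
    (β c0 c1 : ℝ) (n nD NP NQ : ℕ)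
    (hβ0 : 0 ≤ β) (hβ1 : β < 1) (hn : 1 < n) (hNP : 1 ≤ NP) (hNQ : 1 ≤ NQ)
    (hc0 : 0 < c0) (hc1 : 0 < c1)
    (δ1 δ2 : ℝ) (hδ1 : 0 < δ1) (hδ2 : 0 < δ2)
    (EP EQ : Set ((Fin (NP + NQ) → Bool × (Fin n → X × Bool)) × (Fin nD → X × Bool)))
    (hEP : EP = {W |
      (∫ W', (NhatP x1 W'.1 : ℝ) ∂(GammaJ x0 x1 β c0 c1 n nD NP NQ false)) / 2
          ≤ (NhatP x1 W.1 : ℝ) ∧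
      (NhatP x1 W.1 : ℝ)
          ≤ 2 * ∫ W', (NhatP x1 W'.1 : ℝ) ∂(GammaJ x0 x1 β c0 c1 n nD NP NQ false)})
    (hEQ : EQ = {W |
      (NhatQ x1 W.1 : ℝ)
          ≤ 2 * ∫ W', (NhatQ x1 W'.1 : ℝ) ∂(GammaJ x0 x1 β c0 c1 n nD NP NQ false)})
    -- (i): conditionally on each level set of `(N̂_P, N̂_Q)` contained in `E_P ∩ E_Q`
    (hi : ∀ a b : ℕ,
      {W : (Fin (NP + NQ) → Bool × (Fin n → X × Bool)) × (Fin nD → X × Bool) |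
          NhatP x1 W.1 = a ∧ NhatQ x1 W.1 = b} ⊆ EP ∩ EQ →
      δ1 * (GammaJ x0 x1 β c0 c1 n nD NP NQ false
          {W | NhatP x1 W.1 = a ∧ NhatQ x1 W.1 = b}).toReal ≤
        (GammaJ x0 x1 β c0 c1 n nD NP NQ false
          ({W | NhatS x1 (fun t => (W.1 t).2) false < NhatS x1 (fun t => (W.1 t).2) true}
            ∩ {W | NhatP x1 W.1 = a ∧ NhatQ x1 W.1 = b})).toReal)
    -- (ii)
    (hii : δ2 ≤ (GammaJ x0 x1 β c0 c1 n nD NP NQ false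
        {W | ntildeS x1 (fun t => (W.1 t).2) false <
             ntildeS x1 (fun t => (W.1 t).2) true}).toReal) :
    δ1 * (δ2 - (GammaJ x0 x1 β c0 c1 n nD NP NQ false EPᶜ).toReal
            - (GammaJ x0 x1 β c0 c1 n nD NP NQ false EQᶜ).toReal) ≤
      (GammaJ x0 x1 β c0 c1 n nD NP NQ false
        {W | NhatS x1 (fun t => (W.1 t).2) false ≤ NhatS x1 (fun t => (W.1 t).2) true ∧
             nhatS x1 (fun t => (W.1 t).2) false ≤
               nhatS x1 (fun t => (W.1 t).2) true}).toReal :=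
  statement8_general x0 x1 β c0 c1 n nD NP NQ δ1 δ2 hδ1 EP EQ hEP hEQ hi hii

end Paper
end
end

section
/- Target-sample likelihood ratio: Let n_D > 0 and 0 < c_0 ≤ 1/4 in the construction of the target distributions D_±. For Z ∼ Γ_−, the probability that D_+(Z_{N+1})/D_−(Z_{N+1}) ≥ 1 is at least 1/84. -/
open MeasureTheory Finset

noncomputable section

namespace Paper

universe u

/-!
Write `ε₀ = epsTgt β nD`, `d = c₀ ε₀^{1-β}` and `r = (1/2 + d)/(1/2 - d)`. Every target sample
lies on the three atoms `(x₁, ±1)`, `(x₀, +1)`, and `D₊^{n_D}({W}) = r^{S(W)} D₋^{n_D}({W})` where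
`S(W) = #(x₁, +1) - #(x₁, -1)`; so the event is `{S ≥ 0}`. Flipping every label exchanges `D₊`
and `D₋` and negates `S`, hence `D₋(S ≥ 0) + D₊(S ≥ 0) ≥ 1`. Under `D₊` the second moment of `S`
is `n_D ε₀^β/2 + n_D(n_D - 1) c₀² ε₀² ≤ (9/16)(n_D ε₀)²` because `n_D ε₀^{2-β} = 1`, so by Markov
`D₊(S > K) ≤ 1/4` for `K = (3/2) n_D ε₀`, while on `{0 ≤ S ≤ K}` the likelihood ratio is at most
`r^K ≤ e^{8dK} = e^{12 c₀} ≤ e³`. Thus `1 ≤ (1 + e³) D₋(S ≥ 0) + 1/4`, and `3/(4(1 + e³)) ≥ 1/84`.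
The source blocks of `Γ₋` only contribute a factor of total mass at least `1` (for large `c₁` the
measure `twoPt` is not normalized).
-/

section ProductWeights

variable {ι α : Type*} [Fintype ι]

def prodWeight (p : α → ℝ) (f : ι → α) : ℝ := ∏ i, p (f i)

def score (g : α → ℝ) (f : ι → α) : ℝ := ∑ i, g (f i)

lemma prodWeight_nonneg {p : α → ℝ} (hp : ∀ a, 0 ≤ p a) (f : ι → α) : 0 ≤ prodWeight p f :=
  prod_nonneg fun i _ => hp (f i)

lemma prodWeight_pos {p : α → ℝ} (hp : ∀ a, 0 < p a) (f : ι → α) : 0 < prodWeight p f :=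
  prod_pos fun i _ => hp (f i)

lemma prodWeight_eq_rpow_score_mul {p q g : α → ℝ} {r : ℝ} (hr : 0 < r)
    (hq : ∀ a, q a = r ^ g a * p a) (f : ι → α) :
    prodWeight q f = r ^ score g f * prodWeight p f := by
  simp only [prodWeight, score, hq, prod_mul_distrib, Real.rpow_sum_of_pos hr]

variable [Fintype α] [DecidableEq ι]

lemma sum_prodWeight_score_nonneg_eq (τ : α ≃ α) {p q g : α → ℝ}
    (hpq : ∀ a, p (τ a) = q a) (hg : ∀ a, g (τ a) = -g a) :
    ∑ f : ι → α with 0 ≤ score g f, prodWeight q f =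
      ∑ f : ι → α with score g f ≤ 0, prodWeight p f := by
  have hscore (f : ι → α) : score g (τ ∘ f) = -score g f := by simp [score, hg]
  refine sum_equiv ((Equiv.refl ι).arrowCongr τ) (fun f => ?_) (fun f _ => ?_)
  · simp only [mem_filter, mem_univ, true_and]
    rw [show (Equiv.refl ι).arrowCongr τ f = τ ∘ f from rfl, hscore, neg_nonpos]
  · simp [prodWeight, hpq]

lemma sum_prodWeight_mul_prod (p : α → ℝ) (h : ι → α → ℝ) :
    ∑ f : ι → α, prodWeight p f * ∏ i, h i (f i) = ∏ i, ∑ a, p a * h i a := by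
  simp only [Fintype.prod_sum, prodWeight, prod_mul_distrib]

lemma sum_prodWeight {p : α → ℝ} (hp : ∑ a, p a = 1) : ∑ f : ι → α, prodWeight p f = 1 := by
  simpa [hp] using sum_prodWeight_mul_prod (ι := ι) p fun _ _ => 1

lemma sum_prodWeight_mul_apply_mul_apply {p : α → ℝ} (hp : ∑ a, p a = 1) (φ ψ : α → ℝ)
    {i j : ι} (hij : i ≠ j) :
    ∑ f : ι → α, prodWeight p f * (φ (f i) * ψ (f j)) =
      (∑ a, p a * φ a) * ∑ a, p a * ψ a := by
  set h : ι → α → ℝ := fun k a => if k = i then φ a else if k = j then ψ a else 1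
  calc ∑ f : ι → α, prodWeight p f * (φ (f i) * ψ (f j))
      = ∑ f : ι → α, prodWeight p f * ∏ k, h k (f k) := sum_congr rfl fun f _ => by
        rw [Fintype.prod_eq_mul i j hij fun k hk => by simp [h, hk.1, hk.2]]
        simp [h, hij.symm]
    _ = ∏ k, ∑ a, p a * h k a := sum_prodWeight_mul_prod p h
    _ = _ := by
        rw [Fintype.prod_eq_mul i j hij fun k hk => by simp [h, hk.1, hk.2, hp]]
        simp [h, hij.symm]

lemma sum_prodWeight_mul_apply {p : α → ℝ} (hp : ∑ a, p a = 1) (φ : α → ℝ) (i : ι) :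
    ∑ f : ι → α, prodWeight p f * φ (f i) = ∑ a, p a * φ a := by
  set h : ι → α → ℝ := fun k a => if k = i then φ a else 1
  calc ∑ f : ι → α, prodWeight p f * φ (f i)
      = ∑ f : ι → α, prodWeight p f * ∏ k, h k (f k) := sum_congr rfl fun f _ => by
        rw [Fintype.prod_eq_single i fun k hk => by simp [h, hk]]
        simp [h]
    _ = ∏ k, ∑ a, p a * h k a := sum_prodWeight_mul_prod p h
    _ = _ := by
        rw [Fintype.prod_eq_single i fun k hk => by simp [h, hk, hp]]
        simp [h]

lemma sum_prodWeight_mul_score_sq {p : α → ℝ} (hp : ∑ a, p a = 1) (g : α → ℝ) :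
    ∑ f : ι → α, prodWeight p f * score g f ^ 2 =
      Fintype.card ι * ∑ a, p a * g a ^ 2 +
        Fintype.card ι * (Fintype.card ι - 1) * (∑ a, p a * g a) ^ 2 := by
  have hpair (i j : ι) : ∑ f : ι → α, prodWeight p f * (g (f i) * g (f j)) =
      if i = j then ∑ a, p a * g a ^ 2 else (∑ a, p a * g a) ^ 2 := by
    split_ifs with hij
    · subst hij; simpa only [← sq] using sum_prodWeight_mul_apply hp (fun a => g a ^ 2) i
    · rw [sq]; exact sum_prodWeight_mul_apply_mul_apply hp g g hij
  calc ∑ f : ι → α, prodWeight p f * score g f ^ 2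
      = ∑ i, ∑ j, ∑ f : ι → α, prodWeight p f * (g (f i) * g (f j)) := by
        simp_rw [score, sq, sum_mul_sum, mul_sum]
        rw [sum_comm]
        exact sum_congr rfl fun i _ => sum_comm
    _ = ∑ _i : ι, (∑ a, p a * g a ^ 2 + (Fintype.card ι - 1) * (∑ a, p a * g a) ^ 2) := by
        refine sum_congr rfl fun i _ => ?_
        have hsplit (j : ι) : (if i = j then ∑ a, p a * g a ^ 2 else (∑ a, p a * g a) ^ 2) =
            (∑ a, p a * g a) ^ 2 + if i = j then ∑ a, p a * g a ^ 2 - (∑ a, p a * g a) ^ 2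
              else 0 := by
          split_ifs <;> ring
        simp only [hpair, hsplit, sum_add_distrib, sum_const, card_univ, sum_ite_eq, mem_univ,
          if_true, nsmul_eq_mul]
        ring
    _ = _ := by simp; ring

end ProductWeights

section FiniteWeights

variable {κ : Type*} [Fintype κ]

lemma sum_filter_lt_mul_sq_le {w S : κ → ℝ} (hw : ∀ x, 0 ≤ w x)
    {K : ℝ} (hK : 0 ≤ K) :
    (∑ x with K < S x, w x) * K ^ 2 ≤ ∑ x, w x * S x ^ 2 :=
  calc (∑ x with K < S x, w x) * K ^ 2 = ∑ x with K < S x, w x * K ^ 2 := sum_mul ..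
    _ ≤ ∑ x with K < S x, w x * S x ^ 2 := sum_le_sum fun x hx =>
        mul_le_mul_of_nonneg_left (pow_le_pow_left₀ hK (mem_filter.1 hx).2.le 2) (hw x)
    _ ≤ ∑ x, w x * S x ^ 2 := sum_le_sum_of_subset_of_nonneg (subset_univ _)
        fun x _ _ => mul_nonneg (hw x) (sq_nonneg _)

lemma sum_le_rpow_mul_sum_add_sum_filter_lt {P Q S : κ → ℝ} {r : ℝ} (hr : 1 ≤ r)
    (hP : ∀ x, 0 ≤ P x) (hQ : ∀ x, 0 ≤ Q x) (hQP : ∀ x, Q x = r ^ S x * P x)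
    (s : Finset κ) (K : ℝ) :
    ∑ x ∈ s, Q x ≤ r ^ K * ∑ x ∈ s, P x + ∑ x with K < S x, Q x := by
  have hpt (x : κ) : Q x ≤ r ^ K * P x + if K < S x then Q x else 0 := by
    split_ifs with h
    · have := mul_nonneg (Real.rpow_nonneg (zero_le_one.trans hr) K) (hP x); linarith
    · rw [add_zero, hQP]
      exact mul_le_mul_of_nonneg_right
        (Real.rpow_le_rpow_of_exponent_le hr (not_lt.1 h)) (hP x)
  calc ∑ x ∈ s, Q x ≤ ∑ x ∈ s, (r ^ K * P x + if K < S x then Q x else 0) := sum_le_sum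
        fun x _ => hpt x
    _ = r ^ K * ∑ x ∈ s, P x + ∑ x ∈ s with K < S x, Q x := by
        rw [sum_add_distrib, mul_sum, sum_filter]
    _ ≤ _ := add_le_add le_rfl (sum_le_sum_of_subset_of_nonneg
        (filter_subset_filter _ (subset_univ s)) fun x _ _ => hQ x)

end FiniteWeights

section TwoPointAtoms

def twoPtWeight (w η : ℝ) : Option Bool → ℝ
  | none => 1 - w
  | some true => w * η
  | some false => w * (1 - η)

def labelScore : Option Bool → ℝ
  | none => 0
  | some b => sgn b

variable {w η d : ℝ}

lemma sum_twoPtWeight (w η : ℝ) : ∑ o, twoPtWeight w η o = 1 := by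
  simp [Fintype.sum_option, twoPtWeight]
  ring

lemma twoPtWeight_nonneg (hw0 : 0 ≤ w) (hw1 : w ≤ 1) (hη0 : 0 ≤ η) (hη1 : η ≤ 1)
    (o : Option Bool) : 0 ≤ twoPtWeight w η o := by
  rcases o with _ | _ | _ <;> simp only [twoPtWeight] <;> nlinarith

lemma twoPtWeight_pos (hw0 : 0 < w) (hw1 : w < 1) (hη0 : 0 < η) (hη1 : η < 1)
    (o : Option Bool) : 0 < twoPtWeight w η o := by
  rcases o with _ | _ | _ <;> simp only [twoPtWeight] <;> nlinarith

lemma twoPtWeight_one_sub_map_not (w η : ℝ) (o : Option Bool) :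
    twoPtWeight w (1 - η) (o.map not) = twoPtWeight w η o := by
  rcases o with _ | _ | _ <;> simp [twoPtWeight]

lemma labelScore_map_not (o : Option Bool) : labelScore (o.map not) = -labelScore o := by
  rcases o with _ | _ | _ <;> simp [labelScore, sgn]

lemma twoPtWeight_add_eq_rpow_mul (hd : |d| < 1 / 2) (o : Option Bool) :
    twoPtWeight w (1 / 2 + d) o =
      ((1 / 2 + d) / (1 / 2 - d)) ^ labelScore o * twoPtWeight w (1 / 2 - d) o := by
  obtain ⟨hd₁, hd₂⟩ := abs_lt.1 hd
  have hadd : (1 : ℝ) + 2 * d ≠ 0 := by linarith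
  have hsub : (1 : ℝ) - 2 * d ≠ 0 := by linarith
  rcases o with _ | _ | _
  · simp [twoPtWeight, labelScore]
  · simp only [twoPtWeight, labelScore, sgn, Bool.false_eq_true, if_false, Real.rpow_neg_one,
      inv_div]
    field_simp
    ring
  · simp only [twoPtWeight, labelScore, sgn, if_true, Real.rpow_one]
    field_simp

lemma sum_twoPtWeight_mul_labelScore (w η : ℝ) :
    ∑ o, twoPtWeight w η o * labelScore o = w * (2 * η - 1) := by
  simp [Fintype.sum_option, twoPtWeight, labelScore, sgn]
  ring

lemma sum_twoPtWeight_mul_labelScore_sq (w η : ℝ) :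
    ∑ o, twoPtWeight w η o * labelScore o ^ 2 = w := by
  simp [Fintype.sum_option, twoPtWeight, labelScore, sgn]
  ring

lemma div_le_sum_prodWeight_score_nonneg {ι : Type*} [Fintype ι] [DecidableEq ι] {K : ℝ}
    (hw0 : 0 ≤ w) (hw1 : w ≤ 1) (hd0 : 0 ≤ d) (hd : d < 1 / 2) (hK : 0 < K)
    (hmom : Fintype.card ι * w + Fintype.card ι ^ 2 * (2 * w * d) ^ 2 ≤ K ^ 2 / 4) :
    3 / 4 / (1 + ((1 / 2 + d) / (1 / 2 - d)) ^ K) ≤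
      ∑ f : ι → Option Bool with 0 ≤ score labelScore f,
        prodWeight (twoPtWeight w (1 / 2 - d)) f := by
  set P := prodWeight (ι := ι) (twoPtWeight w (1 / 2 - d))
  set Q := prodWeight (ι := ι) (twoPtWeight w (1 / 2 + d))
  set S := score (ι := ι) labelScore
  set r := (1 / 2 + d) / (1 / 2 - d)
  have hr : 1 ≤ r := by rw [le_div_iff₀ (by linarith)]; linarith
  have hP (f : ι → Option Bool) : 0 ≤ P f :=
    prodWeight_nonneg (twoPtWeight_nonneg hw0 hw1 (by linarith) (by linarith)) f
  have hQ (f : ι → Option Bool) : 0 ≤ Q f :=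
    prodWeight_nonneg (twoPtWeight_nonneg hw0 hw1 (by linarith) (by linarith)) f
  have hQP (f : ι → Option Bool) : Q f = r ^ S f * P f :=
    prodWeight_eq_rpow_score_mul (by linarith)
      (twoPtWeight_add_eq_rpow_mul (abs_lt.2 ⟨by linarith, hd⟩)) f
  have hcover : 1 ≤ ∑ f with 0 ≤ S f, P f + ∑ f with S f ≤ 0, P f := by
    rw [← sum_prodWeight (ι := ι) (sum_twoPtWeight w (1 / 2 - d)),
      ← sum_filter_add_sum_filter_not univ (fun f => 0 ≤ S f)]
    refine add_le_add le_rfl (sum_le_sum_of_subset_of_nonneg (fun f => ?_) fun f _ _ => hP f)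
    simp only [mem_filter, mem_univ, true_and, not_le]
    exact le_of_lt
  have hswap : ∑ f with 0 ≤ S f, Q f = ∑ f with S f ≤ 0, P f :=
    sum_prodWeight_score_nonneg_eq (Equiv.optionCongr Equiv.boolNot)
      (fun o => by
        rw [show (1 : ℝ) / 2 - d = 1 - (1 / 2 + d) by ring]
        exact twoPtWeight_one_sub_map_not w (1 / 2 + d) o)
      labelScore_map_not
  have htail : ∑ f with K < S f, Q f ≤ 1 / 4 := by
    have hmarkov := sum_filter_lt_mul_sq_le hQ hK.le (S := S)
    rw [sum_prodWeight_mul_score_sq (sum_twoPtWeight _ _), sum_twoPtWeight_mul_labelScore,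
      sum_twoPtWeight_mul_labelScore_sq] at hmarkov
    have hn : (0 : ℝ) ≤ Fintype.card ι := Nat.cast_nonneg _
    nlinarith [sq_nonneg (2 * w * d), pow_pos hK 2]
  have htilt := sum_le_rpow_mul_sum_add_sum_filter_lt hr hP hQ hQP {f | 0 ≤ S f} K
  rw [div_le_iff₀ (by positivity)]
  linarith

end TwoPointAtoms

lemma one_le_pi_univ {ι : Type*} [Fintype ι] {Y : ι → Type*} [∀ i, MeasurableSpace (Y i)]
    {μ : ∀ i, Measure (Y i)} [∀ i, SigmaFinite (μ i)] (hμ : ∀ i, 1 ≤ μ i Set.univ) :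
    1 ≤ Measure.pi μ Set.univ := by
  rw [Measure.pi_univ]
  exact one_le_prod' fun i _ => hμ i

section Measures

variable {X : Type u}

def atom (x0 x1 : X) : Option Bool → X × Bool
  | none => (x0, true)
  | some b => (x1, b)

lemma atom_injective {x0 x1 : X} (hx : x0 ≠ x1) : Function.Injective (atom x0 x1) := by
  rintro (_ | _ | _) (_ | _ | _) h <;> simp_all [atom, Ne.symm hx]

variable [MeasurableSpace X]

instance (x0 x1 : X) (w η : ℝ) : IsFiniteMeasure (twoPt x0 x1 w η) :=
  ⟨by simp [twoPt]⟩

instance (x0 x1 : X) (β c1 : ℝ) (n NP NQ : ℕ) (σ : Bool) :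
    IsFiniteMeasure (blockM x0 x1 β c1 n NP NQ σ) :=
  ⟨by simp [blockM, Psrc, Qsrc, ENNReal.mul_lt_top]⟩

lemma one_le_twoPt_univ (x0 x1 : X) (w η : ℝ) : 1 ≤ twoPt x0 x1 w η Set.univ := by
  simp only [twoPt, Measure.add_apply, Measure.smul_apply, smul_eq_mul, measure_univ, mul_one]
  calc (1 : ENNReal) = ENNReal.ofReal (w * η + w * (1 - η) + (1 - w)) := by ring_nf; simp
    _ ≤ _ := (ENNReal.ofReal_add_le).trans (add_le_add ENNReal.ofReal_add_le le_rfl)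

lemma one_le_blockM_univ (x0 x1 : X) (β c1 : ℝ) (n : ℕ) {NP NQ : ℕ} (hN : 0 < NP + NQ)
    (σ : Bool) : 1 ≤ blockM x0 x1 β c1 n NP NQ σ Set.univ := by
  simp only [blockM, Measure.add_apply, Measure.smul_apply, smul_eq_mul]
  calc (1 : ENNReal) = ENNReal.ofReal ((NP : ℝ) / (NP + NQ) + NQ / (NP + NQ)) := by
        rw [← add_div, div_self (by norm_cast; omega), ENNReal.ofReal_one]
    _ ≤ _ := ENNReal.ofReal_add_le.trans (add_le_add
        (le_mul_of_one_le_right' (one_le_pi_univ fun _ => one_le_twoPt_univ ..))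
        (le_mul_of_one_le_right' (one_le_pi_univ fun _ => one_le_twoPt_univ ..)))

variable [MeasurableSingletonClass X] {x0 x1 : X}

lemma twoPt_singleton_atom (hx : x0 ≠ x1) (w η : ℝ) (o : Option Bool) :
    twoPt x0 x1 w η {atom x0 x1 o} = ENNReal.ofReal (twoPtWeight w η o) := by
  rcases o with _ | _ | _ <;> simp [twoPt, atom, twoPtWeight, hx, Ne.symm hx]

lemma pi_twoPt_singleton_atom_comp {ι : Type*} [Fintype ι] (hx : x0 ≠ x1) {w η : ℝ}
    (hw0 : 0 ≤ w) (hw1 : w ≤ 1) (hη0 : 0 ≤ η) (hη1 : η ≤ 1) (f : ι → Option Bool) :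
    Measure.pi (fun _ : ι => twoPt x0 x1 w η) {atom x0 x1 ∘ f} =
      ENNReal.ofReal (prodWeight (twoPtWeight w η) f) := by
  rw [← Set.univ_pi_singleton, Measure.pi_pi, prodWeight,
    ENNReal.ofReal_prod_of_nonneg fun i _ => twoPtWeight_nonneg hw0 hw1 hη0 hη1 (f i)]
  simp [twoPt_singleton_atom hx]

lemma pi_twoPt_image_atom_comp {ι : Type*} [Fintype ι] (hx : x0 ≠ x1) {w η : ℝ}
    (hw0 : 0 ≤ w) (hw1 : w ≤ 1) (hη0 : 0 ≤ η) (hη1 : η ≤ 1) (A : Finset (ι → Option Bool)) :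
    Measure.pi (fun _ : ι => twoPt x0 x1 w η) ((atom x0 x1 ∘ ·) '' A) =
      ENNReal.ofReal (∑ f ∈ A, prodWeight (twoPtWeight w η) f) := by
  have himage :
      (atom x0 x1 ∘ ·) '' (A : Set (ι → Option Bool)) = ⋃ f ∈ A, {atom x0 x1 ∘ f} := by
    ext; simp [eq_comm]
  have hdisj : (A : Set (ι → Option Bool)).PairwiseDisjoint fun f => {atom x0 x1 ∘ f} :=
    fun f _ g _ hfg => Set.disjoint_singleton.2
      fun h => hfg (funext fun i => atom_injective hx (congrFun h i))
  rw [himage, measure_biUnion_finset hdisj fun f _ => measurableSet_singleton _,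
    ENNReal.ofReal_sum_of_nonneg fun f _ =>
      prodWeight_nonneg (twoPtWeight_nonneg hw0 hw1 hη0 hη1) f]
  exact sum_congr rfl fun f _ => pi_twoPt_singleton_atom_comp hx hw0 hw1 hη0 hη1 f

end Measures

section TargetScale

variable {β c0 : ℝ} {nD : ℕ}

lemma epsTgt_pos (β : ℝ) (nD : ℕ) : 0 < epsTgt β nD :=
  Real.rpow_pos_of_pos (one_pos.trans_le (le_max_left _ _)) _

lemma epsTgt_le_one (hβ : β ≤ 2) (nD : ℕ) : epsTgt β nD ≤ 1 :=
  Real.rpow_le_one_of_one_le_of_nonpos (le_max_left _ _)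
    (neg_nonpos.2 (one_div_nonneg.2 (by linarith)))

lemma natCast_mul_epsTgt_rpow (hβ : β ≠ 2) (hnD : 0 < nD) :
    (nD : ℝ) * epsTgt β nD ^ (2 - β) = 1 := by
  have hnD' : (1 : ℝ) ≤ nD := by exact_mod_cast hnD
  rw [epsTgt, max_eq_right hnD', ← Real.rpow_mul (by positivity),
    show -(1 / (2 - β)) * (2 - β) = -1 by field_simp [sub_ne_zero.2 hβ.symm],
    Real.rpow_neg_one, mul_inv_cancel₀ (by positivity)]

lemma target_moment_le (hβ : β ≠ 2) (hnD : 0 < nD) (hc0 : 0 ≤ c0) (hc0' : c0 ≤ 1 / 4) :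
    (nD : ℝ) * (epsTgt β nD ^ β / 2) +
        (nD : ℝ) ^ 2 * (2 * (epsTgt β nD ^ β / 2) * (c0 * epsTgt β nD ^ (1 - β))) ^ 2 ≤
      (3 / 2 * (nD * epsTgt β nD)) ^ 2 / 4 := by
  set e := epsTgt β nD
  have he := epsTgt_pos β nD
  have hmean : 2 * (e ^ β / 2) * (c0 * e ^ (1 - β)) = c0 * e := by
    rw [show 2 * (e ^ β / 2) * (c0 * e ^ (1 - β)) = c0 * (e ^ β * e ^ (1 - β)) by ring,
      ← Real.rpow_add he, add_sub_cancel, Real.rpow_one]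
  have hvar : (nD : ℝ) * e ^ β = (nD * e) ^ 2 := by
    calc (nD : ℝ) * e ^ β = nD * e ^ β * (nD * e ^ (2 - β)) := by
          rw [natCast_mul_epsTgt_rpow hβ hnD, mul_one]
      _ = nD ^ 2 * e ^ (β + (2 - β)) := by rw [Real.rpow_add he]; ring
      _ = (nD * e) ^ 2 := by rw [add_sub_cancel, Real.rpow_two]; ring
  have hc0sq : c0 ^ 2 ≤ 1 / 16 := by nlinarith
  rw [hmean, show (nD : ℝ) * (e ^ β / 2) + nD ^ 2 * (c0 * e) ^ 2 = (1 / 2 + c0 ^ 2) * (nD * e) ^ 2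
    by linear_combination hvar / 2]
  nlinarith [sq_nonneg ((nD : ℝ) * e)]

lemma half_add_div_half_sub_le_exp {d : ℝ} (hd0 : 0 ≤ d) (hd : d ≤ 1 / 4) :
    (1 / 2 + d) / (1 / 2 - d) ≤ Real.exp (8 * d) := by
  calc (1 / 2 + d) / (1 / 2 - d) ≤ 8 * d + 1 := by
        rw [div_le_iff₀ (by linarith)]; nlinarith
    _ ≤ Real.exp (8 * d) := Real.add_one_le_exp _

lemma target_ratio_rpow_le (hβ1 : β < 1) (hnD : 0 < nD) (hc0 : 0 ≤ c0) (hc0' : c0 ≤ 1 / 4) :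
    ((1 / 2 + c0 * epsTgt β nD ^ (1 - β)) / (1 / 2 - c0 * epsTgt β nD ^ (1 - β))) ^
        (3 / 2 * (nD * epsTgt β nD)) ≤ Real.exp 3 := by
  set e := epsTgt β nD
  have he := epsTgt_pos β nD
  have he1 : e ^ (1 - β) ≤ 1 := Real.rpow_le_one he.le (epsTgt_le_one (by linarith) nD)
    (by linarith)
  have hd0 : 0 ≤ c0 * e ^ (1 - β) := mul_nonneg hc0 (Real.rpow_nonneg he.le _)
  have hK : 8 * (c0 * e ^ (1 - β)) * (3 / 2 * (nD * e)) = 12 * c0 := by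
    rw [show 8 * (c0 * e ^ (1 - β)) * (3 / 2 * (nD * e)) = 12 * c0 * (nD * (e ^ (1 - β) * e))
      by ring, ← Real.rpow_add_one he.ne', sub_add_eq_add_sub, one_add_one_eq_two,
      natCast_mul_epsTgt_rpow (by linarith) hnD, mul_one]
  calc _ ≤ Real.exp (8 * (c0 * e ^ (1 - β))) ^ (3 / 2 * (nD * e)) :=
        Real.rpow_le_rpow (div_nonneg (by linarith) (by nlinarith))
          (half_add_div_half_sub_le_exp hd0 (by nlinarith)) (by positivity)
    _ = Real.exp (12 * c0) := by rw [← Real.exp_mul, hK]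
    _ ≤ Real.exp 3 := Real.exp_le_exp.2 (by linarith)

lemma exp_three_le : Real.exp 3 ≤ 62 := by
  calc Real.exp 3 = Real.exp 1 ^ 3 := by simp
    _ ≤ 2.7182818286 ^ 3 := pow_le_pow_left₀ (Real.exp_pos 1).le Real.exp_one_lt_d9.le 3
    _ ≤ 62 := by norm_num

end TargetScale

section Target

variable {X : Type u} [MeasurableSpace X] {x0 x1 : X} {β c0 : ℝ} {nD : ℕ}

instance {σ : Bool} : IsFiniteMeasure (tgtM x0 x1 β c0 nD σ) := by
  unfold tgtM Dtgt; infer_instance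

lemma tgtM_true_eq :
    tgtM x0 x1 β c0 nD true = Measure.pi fun _ =>
      twoPt x0 x1 (epsTgt β nD ^ β / 2) (1 / 2 + c0 * epsTgt β nD ^ (1 - β)) := by
  simp [tgtM, Dtgt, sgn]

lemma tgtM_false_eq :
    tgtM x0 x1 β c0 nD false = Measure.pi fun _ =>
      twoPt x0 x1 (epsTgt β nD ^ β / 2) (1 / 2 - c0 * epsTgt β nD ^ (1 - β)) := by
  simp [tgtM, Dtgt, sgn, sub_eq_add_neg]

lemma ofReal_one_div_84_le_tgtM_ratio_ge_one [MeasurableSingletonClass X] (hx : x0 ≠ x1)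
    (hβ0 : 0 ≤ β) (hβ1 : β < 1) (hnD : 0 < nD) (hc0 : 0 < c0) (hc0' : c0 ≤ 1 / 4) :
    ENNReal.ofReal (1 / 84) ≤ tgtM x0 x1 β c0 nD false
      {W | 1 ≤ tgtM x0 x1 β c0 nD true {W} / tgtM x0 x1 β c0 nD false {W}} := by
  rw [tgtM_true_eq, tgtM_false_eq]
  set e := epsTgt β nD
  set d := c0 * e ^ (1 - β)
  set K := 3 / 2 * (nD * e)
  set r := (1 / 2 + d) / (1 / 2 - d)
  have he := epsTgt_pos β nD
  have he1 : e ≤ 1 := epsTgt_le_one (by linarith) nD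
  have hw0 : 0 < e ^ β / 2 := by positivity
  have hw1 : e ^ β / 2 < 1 := by linarith [Real.rpow_le_one he.le he1 hβ0]
  have hd0 : 0 < d := by positivity
  have hd1 : d ≤ 1 / 4 := by
    nlinarith [Real.rpow_le_one he.le he1 (show 0 ≤ 1 - β by linarith)]
  have hr : 1 ≤ r := by rw [le_div_iff₀ (by linarith)]; linarith
  have hK : 0 < K := by
    have : (0 : ℝ) < nD := by exact_mod_cast hnD
    positivity
  set A : Finset (Fin nD → Option Bool) := {f | 0 ≤ score labelScore f}
  have hA : (atom x0 x1 ∘ ·) '' (A : Set (Fin nD → Option Bool)) ⊆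
      {W | 1 ≤ Measure.pi (fun _ => twoPt x0 x1 (e ^ β / 2) (1 / 2 + d)) {W} /
        Measure.pi (fun _ => twoPt x0 x1 (e ^ β / 2) (1 / 2 - d)) {W}} := by
    rintro _ ⟨f, hf, rfl⟩
    have hPf := prodWeight_pos
      (twoPtWeight_pos hw0 hw1 (show 0 < 1 / 2 - d by linarith) (by linarith)) f
    rw [Set.mem_ofPred_eq, pi_twoPt_singleton_atom_comp hx hw0.le hw1.le (by linarith)
        (by linarith), pi_twoPt_singleton_atom_comp hx hw0.le hw1.le (by linarith) (by linarith),
      prodWeight_eq_rpow_score_mul (by positivity)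
        (twoPtWeight_add_eq_rpow_mul (abs_lt.2 ⟨by linarith, by linarith⟩)) f,
      ENNReal.le_div_iff_mul_le (Or.inl (ENNReal.ofReal_pos.2 hPf).ne')
        (Or.inl ENNReal.ofReal_ne_top), one_mul]
    exact ENNReal.ofReal_le_ofReal
      (le_mul_of_one_le_left hPf.le (Real.one_le_rpow hr (mem_filter.1 hf).2))
  have hcore := div_le_sum_prodWeight_score_nonneg (ι := Fin nD) hw0.le hw1.le hd0.le
    (by linarith) hK (by simpa using target_moment_le (by linarith) hnD hc0.le hc0')
  have hratio : r ^ K ≤ 62 :=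
    (target_ratio_rpow_le hβ1 hnD hc0.le hc0').trans exp_three_le
  calc ENNReal.ofReal (1 / 84) ≤ ENNReal.ofReal (3 / 4 / (1 + r ^ K)) :=
        ENNReal.ofReal_le_ofReal (by rw [le_div_iff₀ (by positivity)]; linarith)
    _ ≤ ENNReal.ofReal (∑ f ∈ A, prodWeight (twoPtWeight (e ^ β / 2) (1 / 2 - d)) f) :=
        ENNReal.ofReal_le_ofReal hcore
    _ = _ := (pi_twoPt_image_atom_comp hx hw0.le hw1.le (by linarith) (by linarith) A).symm
    _ ≤ _ := measure_mono hA

end Target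

theorem statement11_general {X : Type u} [MeasurableSpace X] [MeasurableSingletonClass X]
    (x0 x1 : X) (hx : x0 ≠ x1)
    (β c0 c1 : ℝ) (n nD NP NQ : ℕ)
    (hβ0 : 0 ≤ β) (hβ1 : β < 1)
    (hnD : 0 < nD) (hc0 : 0 < c0) (hc0' : c0 ≤ 1 / 4) :
    1 / 84 ≤ (Gamma x0 x1 β c0 c1 n nD NP NQ false
        {Z | 1 ≤ tgtM x0 x1 β c0 nD true {Z.2} /
              tgtM x0 x1 β c0 nD false {Z.2}}).toReal := by
  have hsrc : 1 ≤ (Measure.pi fun _ : Fin (NP + NQ) =>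
      blockM x0 x1 β c1 n NP NQ false) Set.univ :=
    one_le_pi_univ fun t => one_le_blockM_univ x0 x1 β c1 n t.pos false
  have htgt := ofReal_one_div_84_le_tgtM_ratio_ge_one hx hβ0 hβ1 hnD hc0 hc0'
  rw [Gamma, ← Set.preimage_ofPred_eq (p := fun W => 1 ≤ tgtM x0 x1 β c0 nD true {W} /
    tgtM x0 x1 β c0 nD false {W}), ← Set.univ_prod, Measure.prod_prod, ENNReal.toReal_mul]
  calc (1 : ℝ) / 84 ≤ 1 * (tgtM x0 x1 β c0 nD false _).toReal := by
        rw [one_mul]; exact (ENNReal.ofReal_le_iff_le_toReal (measure_ne_top _ _)).1 htgt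
    _ ≤ _ := mul_le_mul_of_nonneg_right
        (by simpa using ENNReal.toReal_mono (measure_ne_top _ _) hsrc) ENNReal.toReal_nonneg

/-- Proposition: target-sample likelihood ratio.
For `n_D > 0` and `0 < c₀ ≤ 1/4`, for `Z ∼ Γ₋`,
`P(D₊(Z_{N+1}) / D₋(Z_{N+1}) ≥ 1) ≥ 1/84`, where `D_σ(Z_{N+1})` denotes the
probability of the observed target block under `D_σ^{n_D}`. -/
theorem statement11 {X : Type u} [MeasurableSpace X] [MeasurableSingletonClass X]
    (x0 x1 : X) (hx : x0 ≠ x1)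
    (β c0 c1 : ℝ) (n nD NP NQ : ℕ)
    (hβ0 : 0 ≤ β) (hβ1 : β < 1) (hn : 1 ≤ n) (hNP : 1 ≤ NP) (hNQ : 1 ≤ NQ)
    (hnD : 0 < nD) (hc0 : 0 < c0) (hc0' : c0 ≤ 1 / 4) (hc1 : 0 < c1) :
    1 / 84 ≤ (Gamma x0 x1 β c0 c1 n nD NP NQ false
        {Z | 1 ≤ tgtM x0 x1 β c0 nD true {Z.2} /
              tgtM x0 x1 β c0 nD false {Z.2}}).toReal :=
  statement11_general x0 x1 hx β c0 c1 n nD NP NQ hβ0 hβ1 hnD hc0 hc0'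

end Paper
end
end
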